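/- arXiv:1812.08080 — 10 statements merged into one kernel-verified Lean document; each statement's English description precedes it below -/
import Mathlib

section
/- Let p be an odd prime and let c, d, i be integers with p not dividing c. Then the sum over j from 0 to p-1 of (j/p)·((i²+cij+dj²)/p) is congruent modulo p to −(ci/p) · Σ_{k=0}^{p-1} C(4k,2k)·C(2k,k)·(d/(16c²))^k, where (·/p) denotes the Legendre symbol and d/(16c²) is interpreted modulo p. -/
/-!
By Euler's criterion both Legendre symbols are `m`-th powers, `m = (p - 1) / 2`, so the left
side is `∑ x, x ^ m * (i² + c i x + d x²) ^ m` over `𝔽_p`. Since `∑ x, x ^ e` is `-1` for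
`e = p - 1` and `0` for the other `0 < e < 2 (p - 1)`, this is minus the coefficient of `x ^ m`
in `(i² + c i x + d x²) ^ m`, i.e. `-∑ k, C(m, 2k) C(2k, k) i^(2k) (c i)^(m - 2k) d^k`.
As `m ≡ -1/2`, `C(2j, j) ≡ (-4)^j C(m, j)` for `j ≤ m`; hence `C(4k, 2k) ≡ 16^k C(m, 2k)`,
the terms with `2k > m` vanish mod `p`, and the right side agrees term by term.
-/

open Finset

theorem ZMod.sum_range_natCast {M : Type*} [AddCommMonoid M] (n : ℕ) [NeZero n]
    (f : ZMod n → M) : ∑ j ∈ range n, f j = ∑ x : ZMod n, f x :=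
  sum_nbij' (↑) ZMod.val (fun _ _ => mem_univ _) (fun x _ => mem_range.mpr x.val_lt)
    (fun _ hj => ZMod.val_cast_of_lt (mem_range.mp hj)) (fun x _ => ZMod.natCast_zmod_val x)
    (fun _ _ => rfl)

namespace FiniteField

variable {K : Type*} [Field K] [Fintype K]

theorem sum_pow_of_pos_of_lt {e : ℕ} (he : 0 < e) (he' : e < 2 * (Fintype.card K - 1)) :
    ∑ x : K, x ^ e = if e = Fintype.card K - 1 then -1 else 0 := by
  classical
  have hunits : ∑ x : K, x ^ e = ∑ x : Kˣ, (x ^ e : K) := by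
    rw [← Fintype.sum_subtype_add_sum_subtype (fun x : K => x ≠ 0),
      ← Fintype.sum_equiv unitsEquivNeZero _ _ (fun _ => rfl)]
    refine add_eq_left.mpr ?_
    exact Fintype.sum_eq_zero _ fun x => by simp [not_not.mp x.2, he.ne']
  have hdvd : Fintype.card K - 1 ∣ e ↔ e = Fintype.card K - 1 := by
    refine ⟨fun ⟨s, hs⟩ => ?_, fun h => h ▸ dvd_rfl⟩
    rcases s with _ | _ | s
    · omega
    · simpa using hs
    · nlinarith
  rw [hunits, sum_pow_units]
  exact if_congr hdvd rfl rfl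

theorem sum_pow_mul_quadratic_pow {m : ℕ} (hq : Fintype.card K = 2 * m + 1) (a b c : K) :
    ∑ x : K, x ^ m * (a + b * x + c * x ^ 2) ^ m =
      -∑ k ∈ range (m + 1),
        ((m.choose (2 * k) * (2 * k).choose k : ℕ) : K) * a ^ k * b ^ (m - 2 * k) * c ^ k := by
  have hm : 0 < m := by
    have := Fintype.one_lt_card (α := K); omega
  set coeff : ℕ → ℕ → K := fun j l =>
    ((m.choose j * j.choose l : ℕ) : K) * a ^ (j - l) * b ^ (m - j) * c ^ l with hcoeff
  have expand : ∀ x : K, x ^ m * (a + b * x + c * x ^ 2) ^ m =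
      ∑ j ∈ range (m + 1), ∑ l ∈ range (j + 1), coeff j l * x ^ (m + 2 * l + (m - j)) := by
    intro x
    rw [show a + b * x + c * x ^ 2 = (c * x ^ 2 + a) + b * x by ring, add_pow, mul_sum]
    refine sum_congr rfl fun j _ => ?_
    rw [add_pow, sum_mul, sum_mul, mul_sum]
    refine sum_congr rfl fun l _ => ?_
    simp only [hcoeff, Nat.cast_mul, pow_add, mul_pow, ← pow_mul]
    ring
  have power_sum : ∀ j ∈ range (m + 1), ∀ l ∈ range (j + 1),
      ∑ x : K, coeff j l * x ^ (m + 2 * l + (m - j)) = if j = 2 * l then -coeff j l else 0 := by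
    intro j hj l hl
    rw [mem_range] at hj hl
    rw [← mul_sum, sum_pow_of_pos_of_lt (by omega) (by omega), hq]
    simp only [show m + 2 * l + (m - j) = 2 * m + 1 - 1 ↔ j = 2 * l by omega]
    split_ifs <;> ring
  calc ∑ x : K, x ^ m * (a + b * x + c * x ^ 2) ^ m
      = ∑ j ∈ range (m + 1), ∑ l ∈ range (j + 1), if j = 2 * l then -coeff j l else 0 := by
        simp only [expand]
        rw [sum_comm]
        refine sum_congr rfl fun j hj => ?_
        rw [sum_comm]
        exact sum_congr rfl (power_sum j hj)
    _ = ∑ j ∈ range (m + 1), ∑ l ∈ range (m + 1), if j = 2 * l then -coeff j l else 0 := by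
        refine sum_congr rfl fun j hj => sum_subset ?_ fun l _ hl => if_neg ?_
        · exact range_subset_range.mpr (by simpa using hj)
        · simp only [mem_range] at hl; omega
    _ = -∑ k ∈ range (m + 1), coeff (2 * k) k := by
        rw [sum_comm, ← sum_neg_distrib]
        refine sum_congr rfl fun k _ => ?_
        rw [sum_ite_eq']
        split_ifs with hk
        · rfl
        · simp only [hcoeff, mem_range] at hk ⊢
          rw [Nat.choose_eq_zero_of_lt (by omega)]
          simp
    _ = _ := by
        congr 1
        refine sum_congr rfl fun k _ => ?_
        simp only [hcoeff, show 2 * k - k = k by omega]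

end FiniteField

section CharP

variable {K : Type*} [Field K] {p m : ℕ} [CharP K p]

theorem choose_two_mul_eq_neg_four_pow_mul_choose (hp : p = 2 * m + 1) {j : ℕ} (hj : j ≤ m) :
    ((2 * j).choose j : K) = (-4) ^ j * (m.choose j : K) := by
  have h2m : (2 * m + 1 : K) = 0 := by exact_mod_cast hp ▸ CharP.cast_eq_zero K p
  induction j with
  | zero => simp
  | succ j ih =>
    have hj1 : ((j + 1 : ℕ) : K) ≠ 0 := by
      rw [Ne, CharP.cast_eq_zero_iff K p]
      exact fun h => by have := Nat.le_of_dvd (by omega) h; omega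
    have central : ((j + 1 : ℕ) : K) * ((2 * (j + 1)).choose (j + 1) : K) =
        2 * (2 * j + 1) * ((2 * j).choose j : K) := by
      have := Nat.succ_mul_centralBinom_succ j
      simp only [Nat.centralBinom] at this
      simpa using congrArg (Nat.cast : ℕ → K) this
    have pascal : (m.choose (j + 1) : K) * ((j + 1 : ℕ) : K) = (m.choose j : K) * (m - j) := by
      rw [← Nat.cast_sub (by omega), ← Nat.cast_mul, ← Nat.cast_mul, Nat.choose_succ_right_eq]
    refine mul_left_cancel₀ hj1 ?_
    rw [ih (by omega)] at central
    push_cast at central pascal ⊢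
    linear_combination central - (-4) ^ (j + 1) * pascal + 2 * (-4) ^ j * (m.choose j : K) * h2m

theorem choose_four_mul_mul_choose_eq (hp : p = 2 * m + 1) {k : ℕ} (hk : k < p) :
    (((4 * k).choose (2 * k) * (2 * k).choose k : ℕ) : K) =
      16 ^ k * (((m.choose (2 * k)) * (2 * k).choose k : ℕ) : K) := by
  have hprime := (CharP.char_is_prime_or_zero K p).resolve_right (by omega)
  rcases le_or_gt (2 * k) m with hkm | hkm
  · rw [Nat.cast_mul, Nat.cast_mul, show 4 * k = 2 * (2 * k) by ring,
      choose_two_mul_eq_neg_four_pow_mul_choose hp hkm, pow_mul]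
    norm_num [mul_assoc]
  · have hdvd : p ∣ (4 * k).choose (2 * k) * (2 * k).choose k := by
      rcases lt_or_ge (2 * k) p with h | h
      · exact (hprime.dvd_choose h (by omega) (by omega)).mul_right _
      · exact (hprime.dvd_choose hk (by omega) (by omega)).mul_left _
    rw [(CharP.cast_eq_zero_iff K p _).mpr hdvd, Nat.choose_eq_zero_of_lt hkm]
    simp

theorem mul_sum_choose_four_mul_choose (hp : p = 2 * m + 1) {c : K} (hc : c ≠ 0) (d i : K) :
    (c * i) ^ m * ∑ k ∈ range p,
        (((4 * k).choose (2 * k) * (2 * k).choose k : ℕ) : K) * (d * (16 * c ^ 2)⁻¹) ^ k =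
      ∑ k ∈ range (m + 1),
        ((m.choose (2 * k) * (2 * k).choose k : ℕ) : K) * (i ^ 2) ^ k * (c * i) ^ (m - 2 * k) *
          d ^ k := by
  have h16 : (16 : K) ≠ 0 := by
    have h2 : (2 : K) ≠ 0 := Ring.two_ne_zero (by rw [ringChar.eq K p]; omega)
    rw [show (16 : K) = 2 ^ 4 by norm_num]
    exact pow_ne_zero 4 h2
  rw [mul_sum, sum_subset (range_subset_range.mpr (by omega : m + 1 ≤ p))]
  · refine sum_congr rfl fun k hk => ?_
    rw [choose_four_mul_mul_choose_eq hp (mem_range.mp hk)]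
    rcases le_or_gt (2 * k) m with hkm | hkm
    · have hscale :
          16 ^ k * (d * (16 * c ^ 2)⁻¹) ^ k * (c * i) ^ (2 * k) = (i ^ 2) ^ k * d ^ k := by
        rw [pow_mul, ← mul_pow, ← mul_pow, ← mul_pow]
        congr 1
        field_simp
      rw [← pow_sub_mul_pow (c * i) hkm]
      linear_combination
        (((m.choose (2 * k) * (2 * k).choose k : ℕ) : K) * (c * i) ^ (m - 2 * k)) * hscale
    · rw [Nat.choose_eq_zero_of_lt hkm]
      simp
  · intro k _ hk
    rw [mem_range] at hk
    rw [Nat.choose_eq_zero_of_lt (by omega : m < 2 * k)]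
    simp

end CharP

theorem stmt_0 (p : ℕ) [Fact p.Prime] (hp2 : p ≠ 2) (c d i : ℤ)
    (hc : ¬ (p : ℤ) ∣ c) :
    ((∑ j ∈ Finset.range p,
        legendreSym p j * legendreSym p (i ^ 2 + c * i * j + d * j ^ 2) : ℤ) : ZMod p)
      = -((legendreSym p (c * i) : ℤ) : ZMod p) *
          ∑ k ∈ Finset.range p,
            ((Nat.choose (4 * k) (2 * k) * Nat.choose (2 * k) k : ℕ) : ZMod p) *
              ((d : ZMod p) * ((16 * (c : ZMod p) ^ 2))⁻¹) ^ k := by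
  have hp : p = 2 * (p / 2) + 1 :=
    (Nat.two_mul_div_two_add_one_of_odd ((Fact.out : p.Prime).odd_of_ne_two hp2)).symm
  have hc' : (c : ZMod p) ≠ 0 := by rwa [Ne, ZMod.intCast_zmod_eq_zero_iff_dvd]
  calc _ = ∑ x : ZMod p,
        x ^ (p / 2) * ((i : ZMod p) ^ 2 + (c * i : ZMod p) * x + d * x ^ 2) ^ (p / 2) := by
        push_cast
        rw [← ZMod.sum_range_natCast]
        simp only [legendreSym.eq_pow, Int.cast_mul, Int.cast_add, Int.cast_pow, Int.cast_natCast]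
    _ = _ := FiniteField.sum_pow_mul_quadratic_pow (by rw [ZMod.card]; exact hp) _ _ _
    _ = _ := by
        rw [legendreSym.eq_pow, Int.cast_mul, neg_mul,
          mul_sum_choose_four_mul_choose hp hc' (d : ZMod p) i]
end

section
/- Let p be an odd prime and let c, d, i be integers with p not dividing d. Then Σ_{j=0}^{p-1} (j/p)·((i²+3cij+dj²)/p) = (i/p) · Σ_{x=0}^{p-1} ((x³−(3c²−d)x+c(2c²−d))/p), where (·/p) is the Legendre symbol. -/
/-!
Write χ for the quadratic character. For i ≠ 0, substituting j = i/u turns the binary form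
into (i/u)²(u² + bu + d), and since χ(u⁻¹) = χ(u) the summand becomes χ(i)·χ(u(u² + bu + d)).
The shift u = x - c then depresses the cubic u³ + 3cu² + du to the one on the right-hand side.
For i ≡ 0 both sides vanish: the left one is χ(d)·∑ χ(j) = 0 because p is odd.
-/

open Finset

lemma sum_range_natCast_eq_sum_zmod {M : Type*} [AddCommMonoid M] (p : ℕ) [NeZero p]
    (f : ZMod p → M) : ∑ j ∈ range p, f j = ∑ x : ZMod p, f x :=
  sum_nbij' (↑) ZMod.val (fun _ _ ↦ mem_univ _) (fun a _ ↦ mem_range.mpr a.val_lt)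
    (fun _ hj ↦ ZMod.val_cast_of_lt (mem_range.mp hj)) (fun a _ ↦ ZMod.natCast_zmod_val a)
    (fun _ _ ↦ rfl)

section

variable {F : Type*} [Field F] [Fintype F] [DecidableEq F]

lemma quadraticChar_inv (a : F) : quadraticChar F a⁻¹ = quadraticChar F a := by
  rw [← MulChar.inv_apply', (quadraticChar_isQuadratic F).inv]

lemma quadraticChar_sq_mul {a : F} (ha : a ≠ 0) (b : F) :
    quadraticChar F (a ^ 2 * b) = quadraticChar F b := by
  rw [map_mul, quadraticChar_sq_one' ha, one_mul]

lemma quadraticChar_binaryForm_at_div (b d : F) {i : F} (hi : i ≠ 0) (u : F) :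
    quadraticChar F (i * u⁻¹) *
        quadraticChar F (i ^ 2 + b * i * (i * u⁻¹) + d * (i * u⁻¹) ^ 2)
      = quadraticChar F i * quadraticChar F (u * (u ^ 2 + b * u + d)) := by
  rcases eq_or_ne u 0 with rfl | hu
  · simp
  have hform : i ^ 2 + b * i * (i * u⁻¹) + d * (i * u⁻¹) ^ 2
      = (i * u⁻¹) ^ 2 * (u ^ 2 + b * u + d) := by
    field_simp
  rw [hform, quadraticChar_sq_mul (by simp [hi, hu]), map_mul, map_mul,
    quadraticChar_inv, mul_assoc]

lemma sum_quadraticChar_binaryForm_of_ne_zero (b d : F) {i : F} (hi : i ≠ 0) :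
    ∑ j, quadraticChar F j * quadraticChar F (i ^ 2 + b * i * j + d * j ^ 2)
      = quadraticChar F i * ∑ u, quadraticChar F (u * (u ^ 2 + b * u + d)) := by
  let σ : Equiv.Perm F := (Equiv.inv F).trans (Equiv.mulLeft₀ i hi)
  rw [← Equiv.sum_comp σ, mul_sum]
  exact sum_congr rfl fun u _ ↦ quadraticChar_binaryForm_at_div b d hi u

lemma sum_quadraticChar_binaryForm_zero (hF : ringChar F ≠ 2) (b d : F) :
    ∑ j, quadraticChar F j * quadraticChar F (0 ^ 2 + b * 0 * j + d * j ^ 2) = 0 := by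
  have hterm (j : F) : quadraticChar F j * quadraticChar F (0 ^ 2 + b * 0 * j + d * j ^ 2)
      = quadraticChar F d * quadraticChar F j := by
    rcases eq_or_ne j 0 with rfl | hj
    · simp
    rw [show (0 : F) ^ 2 + b * 0 * j + d * j ^ 2 = j ^ 2 * d by ring,
      quadraticChar_sq_mul hj, mul_comm]
  rw [sum_congr rfl fun j _ ↦ hterm j, ← mul_sum, quadraticChar_sum_zero hF, mul_zero]

lemma sum_quadraticChar_binaryForm (hF : ringChar F ≠ 2) (b d i : F) :
    ∑ j, quadraticChar F j * quadraticChar F (i ^ 2 + b * i * j + d * j ^ 2)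
      = quadraticChar F i * ∑ u, quadraticChar F (u * (u ^ 2 + b * u + d)) := by
  rcases eq_or_ne i 0 with rfl | hi
  · rw [sum_quadraticChar_binaryForm_zero hF, quadraticChar_zero, zero_mul]
  · exact sum_quadraticChar_binaryForm_of_ne_zero b d hi

end

lemma sum_cubic_shift {R M : Type*} [CommRing R] [Fintype R] [AddCommMonoid M] (f : R → M)
    (c d : R) :
    ∑ u, f (u * (u ^ 2 + 3 * c * u + d))
      = ∑ x, f (x ^ 3 - (3 * c ^ 2 - d) * x + c * (2 * c ^ 2 - d)) := by
  rw [← (Equiv.subRight c).sum_comp]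
  exact sum_congr rfl fun x _ ↦ congrArg f (by simp only [Equiv.subRight_apply]; ring)

theorem stmt_2_general (p : ℕ) [Fact p.Prime] (hp2 : p ≠ 2) (c d i : ℤ) :
    ∑ j ∈ Finset.range p,
        legendreSym p j * legendreSym p (i ^ 2 + 3 * c * i * j + d * j ^ 2)
      = legendreSym p i *
          ∑ x ∈ Finset.range p,
            legendreSym p (x ^ 3 - (3 * c ^ 2 - d) * x + c * (2 * c ^ 2 - d)) := by
  have hF : ringChar (ZMod p) ≠ 2 := by rwa [ZMod.ringChar_zmod_n]
  calc _ = ∑ j : ZMod p, quadraticChar (ZMod p) j *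
          quadraticChar (ZMod p) (i ^ 2 + (3 * c) * i * j + d * j ^ 2) := by
        rw [← sum_range_natCast_eq_sum_zmod]; push_cast [legendreSym]; rfl
    _ = quadraticChar (ZMod p) i *
          ∑ u : ZMod p, quadraticChar (ZMod p) (u * (u ^ 2 + (3 * c) * u + d)) :=
        sum_quadraticChar_binaryForm hF _ _ _
    _ = _ := by
        rw [sum_cubic_shift, ← sum_range_natCast_eq_sum_zmod]; push_cast [legendreSym]; rfl

theorem stmt_2 (p : ℕ) [Fact p.Prime] (hp2 : p ≠ 2) (c d i : ℤ)
    (hd : ¬ (p : ℤ) ∣ d) :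
    ∑ j ∈ Finset.range p,
        legendreSym p j * legendreSym p (i ^ 2 + 3 * c * i * j + d * j ^ 2)
      = legendreSym p i *
          ∑ x ∈ Finset.range p,
            legendreSym p (x ^ 3 - (3 * c ^ 2 - d) * x + c * (2 * c ^ 2 - d)) :=
  stmt_2_general p hp2 c d i
end

section
/- Let n be a squarefree positive odd integer and let c, d, i be integers. Then Σ_{j=0}^{n-1} (j/n)·((i²+cij+dj²)/n) = Σ_{j=0}^{n-1} (−j/n)·((i²+2cij+(c²−4d)j²)/n), where (·/n) is the Jacobi symbol. -/
/-!
Both sides are sums of `(f j / n)` over a full residue system, with `f` a polynomial, so by the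
Chinese remainder theorem they are multiplicative in squarefree `n` and it suffices to take `n = p`
an odd prime, where `(· / p)` is the quadratic character `χ` of `𝔽_p`. For `i ≠ 0` the
substitution `j ↦ i² / j` turns the two sides into `∑ χ(k (k² + a k + b))` and
`∑ χ(k (k² - 2a k + a² - 4b))` with `a = ci`, `b = di²`, i.e. into the point counts of two
2-isogenous elliptic curves. These agree: for `b ≠ 0`, grouping `j ≠ 0` by `t = j + b / j`, a
fibre has `1 + χ(t² - 4b)` points, and both sums become `∑ χ((t² - 4b)(t + a))`.
-/

open Finset

section FiniteField

variable {F : Type*} [Field F] [Fintype F] [DecidableEq F]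

local notation "χ" => quadraticChar F

theorem quadraticChar_mul_sq (a : F) {b : F} (hb : b ≠ 0) : χ (a * b ^ 2) = χ a := by
  rw [map_mul, quadraticChar_sq_one' hb, mul_one]

theorem sum_quadraticChar_mul_pow_three (hF : ringChar F ≠ 2) (e : F) :
    ∑ j : F, χ (e * j ^ 3) = 0 := by
  have h (j : F) : χ (e * j ^ 3) = χ e * χ j := by
    rcases eq_or_ne j 0 with rfl | hj
    · simp
    rw [show e * j ^ 3 = e * j * j ^ 2 by ring, quadraticChar_mul_sq _ hj, map_mul]
  simp only [h, ← mul_sum, quadraticChar_sum_zero hF, mul_zero]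

theorem card_filter_add_div_eq (hF : ringChar F ≠ 2) {b : F} (hb : b ≠ 0) (t : F) :
    (#{j : F | j ≠ 0 ∧ j + b / j = t} : ℤ) = χ (t ^ 2 - 4 * b) + 1 := by
  have h2 : (2 : F) ≠ 0 := Ring.two_ne_zero hF
  rw [← quadraticChar_card_sqrts hF, Set.toFinset_ofPred]
  congr 1
  -- `j + b / j = t` iff `(2j - t)² = t² - 4b`
  refine card_nbij' (fun j => 2 * j - t) (fun x => (x + t) / 2) ?_ ?_ ?_ ?_
  · intro j hj
    simp only [mem_coe, mem_filter, mem_univ, true_and] at hj ⊢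
    obtain ⟨hj, rfl⟩ := hj
    field_simp
    ring
  · intro x hx
    simp only [mem_coe, mem_filter, mem_univ, true_and] at hx ⊢
    have hxt : x + t ≠ 0 := by
      rintro hxt
      rw [eq_neg_of_add_eq_zero_left hxt] at hx
      exact hb (by simpa [h2] using (show (2 : F) * 2 * b = 0 by linear_combination hx))
    refine ⟨div_ne_zero hxt h2, ?_⟩
    field_simp
    linear_combination hx
  · intro j _
    field_simp
    ring
  · intro x _
    field_simp
    ring

theorem sum_quadraticChar_mul_cubic (hF : ringChar F ≠ 2) (a b : F) :
    ∑ j : F, χ (j * (j ^ 2 + a * j + b)) = ∑ t : F, χ ((t ^ 2 - 4 * b) * (t + a)) := by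
  rcases eq_or_ne b 0 with rfl | hb
  · exact sum_congr rfl fun j _ => by ring_nf
  calc ∑ j : F, χ (j * (j ^ 2 + a * j + b))
      = ∑ j with j ≠ 0, χ (j + b / j + a) := by
        rw [sum_filter]
        refine sum_congr rfl fun j _ => ?_
        split_ifs with hj
        · rw [show j * (j ^ 2 + a * j + b) = (j + b / j + a) * j ^ 2 by field_simp; ring,
            quadraticChar_mul_sq _ hj]
        · simp [not_not.mp hj]
    _ = ∑ t : F, #{j : F | j ≠ 0 ∧ j + b / j = t} * χ (t + a) := by
        rw [← sum_fiberwise' _ (fun j => j + b / j) (fun t => χ (t + a))]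
        simp only [sum_const, filter_filter, nsmul_eq_mul]
    _ = ∑ t : F, χ ((t ^ 2 - 4 * b) * (t + a)) := by
        simp only [card_filter_add_div_eq hF hb, add_mul, one_mul, sum_add_distrib, map_mul]
        rw [Fintype.sum_equiv (Equiv.addRight a) (fun t => χ (t + a)) χ fun _ => rfl,
          quadraticChar_sum_zero hF, add_zero]

theorem sum_quadraticChar_cubic_two_isogeny (hF : ringChar F ≠ 2) (a b : F) :
    ∑ j : F, χ (j * (j ^ 2 + a * j + b))
      = ∑ j : F, χ (j * (j ^ 2 - 2 * a * j + (a ^ 2 - 4 * b))) := by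
  rw [sum_quadraticChar_mul_cubic hF]
  exact Fintype.sum_equiv (Equiv.addRight a) _ _ fun t => by
    simp only [Equiv.coe_addRight]; ring_nf

theorem sum_quadraticChar_mul_quadratic_reverse {i : F} (hi : i ≠ 0) (u v : F) :
    ∑ j : F, χ (j * (i ^ 2 + u * j + v * j ^ 2))
      = ∑ k : F, χ (k * (k ^ 2 + u * k + v * i ^ 2)) := by
  have hi2 : i ^ 2 ≠ 0 := pow_ne_zero 2 hi
  have hinv : Function.Involutive (i ^ 2 / · : F → F) := fun k => div_div_cancel₀ hi2
  refine Fintype.sum_equiv hinv.toPerm _ _ fun j => ?_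
  simp only [Function.Involutive.coe_toPerm]
  rcases eq_or_ne j 0 with rfl | hj
  · simp
  rw [show i ^ 2 / j * ((i ^ 2 / j) ^ 2 + u * (i ^ 2 / j) + v * i ^ 2)
      = j * (i ^ 2 + u * j + v * j ^ 2) * (i ^ 2 / j ^ 2) ^ 2 by field_simp,
    quadraticChar_mul_sq _ (div_ne_zero hi2 (pow_ne_zero 2 hj))]

theorem sum_quadraticChar_mul_binaryForm (hF : ringChar F ≠ 2) (c d i : F) :
    ∑ j : F, χ (j * (i ^ 2 + c * i * j + d * j ^ 2))
      = ∑ j : F, χ (-j * (i ^ 2 + 2 * c * i * j + (c ^ 2 - 4 * d) * j ^ 2)) := by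
  rcases eq_or_ne i 0 with rfl | hi
  · have hL (j : F) : j * (0 ^ 2 + c * 0 * j + d * j ^ 2) = d * j ^ 3 := by ring
    have hR (j : F) : -j * (0 ^ 2 + 2 * c * 0 * j + (c ^ 2 - 4 * d) * j ^ 2)
        = -(c ^ 2 - 4 * d) * j ^ 3 := by ring
    simp only [hL, hR, sum_quadraticChar_mul_pow_three hF]
  calc ∑ j : F, χ (j * (i ^ 2 + c * i * j + d * j ^ 2))
      = ∑ k : F, χ (k * (k ^ 2 + c * i * k + d * i ^ 2)) :=
        sum_quadraticChar_mul_quadratic_reverse hi _ _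
    _ = ∑ k : F, χ (k * (k ^ 2 - 2 * (c * i) * k + ((c * i) ^ 2 - 4 * (d * i ^ 2)))) :=
        sum_quadraticChar_cubic_two_isogeny hF _ _
    _ = ∑ k : F, χ (k * (k ^ 2 + -(2 * c * i) * k + (c ^ 2 - 4 * d) * i ^ 2)) :=
        sum_congr rfl fun k _ => by ring_nf
    _ = ∑ j : F, χ (j * (i ^ 2 + -(2 * c * i) * j + (c ^ 2 - 4 * d) * j ^ 2)) :=
        (sum_quadraticChar_mul_quadratic_reverse hi _ _).symm
    _ = ∑ j : F, χ (-j * (i ^ 2 + 2 * c * i * j + (c ^ 2 - 4 * d) * j ^ 2)) :=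
        Fintype.sum_equiv (Equiv.neg F) _ _ fun j => by simp only [Equiv.neg_apply]; ring_nf

end FiniteField

theorem Finset.sum_range_mul_mul_of_coprime {M : Type*} [CommSemiring M] {a b : ℕ}
    (hab : a.Coprime b) {u v : ℕ → M} (hu : ∀ j, u (j % a) = u j)
    (hv : ∀ j, v (j % b) = v j) :
    ∑ j ∈ range (a * b), u j * v j = (∑ j ∈ range a, u j) * ∑ j ∈ range b, v j := by
  rw [sum_mul_sum, ← sum_product']
  refine sum_nbij' (fun j => (j % a, j % b)) (fun p => Nat.chineseRemainder hab p.1 p.2)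
    ?_ ?_ ?_ ?_ fun j _ => by rw [hu, hv]
  · intro j hj
    simp only [mem_range, mem_product] at hj ⊢
    exact ⟨Nat.mod_lt _ (Nat.pos_of_mul_pos_right (j.zero_le.trans_lt hj)),
      Nat.mod_lt _ (Nat.pos_of_mul_pos_left (j.zero_le.trans_lt hj))⟩
  · rintro ⟨x, y⟩ h
    simp only [mem_range, mem_product] at h ⊢
    exact Nat.chineseRemainder_lt_mul hab x y (by omega) (by omega)
  · intro j hj
    rw [mem_range] at hj
    exact (Nat.chineseRemainder_modEq_unique hab (Nat.mod_modEq j a).symm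
      (Nat.mod_modEq j b).symm).symm.eq_of_lt_of_lt (Nat.chineseRemainder_lt_mul hab _ _
        (by rintro rfl; simp at hj) (by rintro rfl; simp at hj)) hj
  · rintro ⟨x, y⟩ h
    simp only [mem_range, mem_product] at h
    have h' := (Nat.chineseRemainder hab x y).prop
    simp only [Prod.mk.injEq]
    exact ⟨Eq.trans h'.1 (Nat.mod_eq_of_lt h.1), Eq.trans h'.2 (Nat.mod_eq_of_lt h.2)⟩

def PreservesModEq (f : ℤ → ℤ) : Prop :=
  ∀ m x y, x ≡ y [ZMOD m] → f x ≡ f y [ZMOD m]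

theorem jacobiSym_natCast_mod {f : ℤ → ℤ} (hf : PreservesModEq f) (a j : ℕ) :
    jacobiSym (f ↑(j % a)) a = jacobiSym (f j) a :=
  jacobiSym.mod_left' (hf a _ _ (by push_cast; exact Int.mod_modEq j a))

theorem sum_range_jacobiSym_mul_of_coprime {f : ℤ → ℤ} (hf : PreservesModEq f) {a b : ℕ}
    (hab : a.Coprime b) :
    ∑ j ∈ range (a * b), jacobiSym (f j) (a * b)
      = (∑ j ∈ range a, jacobiSym (f j) a) * ∑ j ∈ range b, jacobiSym (f j) b := by
  rcases eq_or_ne a 0 with rfl | ha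
  · simp
  rcases eq_or_ne b 0 with rfl | hb
  · simp
  simp only [jacobiSym.mul_right' _ ha hb]
  exact sum_range_mul_mul_of_coprime hab (jacobiSym_natCast_mod hf a) (jacobiSym_natCast_mod hf b)

theorem sum_range_jacobiSym_eq_sum_quadraticChar (p : ℕ) [Fact p.Prime] (f : ℤ → ℤ)
    {g : ZMod p → ZMod p} (hfg : ∀ j : ℤ, (f j : ZMod p) = g j) :
    ∑ j ∈ range p, jacobiSym (f j) p = ∑ x : ZMod p, quadraticChar (ZMod p) (g x) := by
  simp only [← jacobiSym.legendreSym.to_jacobiSym, legendreSym, hfg, Int.cast_natCast]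
  exact sum_nbij' (↑) ZMod.val (fun _ _ => mem_univ _) (fun x _ => mem_range.2 x.val_lt)
    (fun j hj => ZMod.val_cast_of_lt (mem_range.1 hj)) (fun x _ => ZMod.natCast_zmod_val x)
    fun _ _ => rfl

theorem sum_range_jacobiSym_eq_of_forall_prime {f g : ℤ → ℤ}
    (hf : PreservesModEq f) (hg : PreservesModEq g)
    (hp : ∀ p : ℕ, p.Prime → p ≠ 2 →
      ∑ j ∈ range p, jacobiSym (f j) p = ∑ j ∈ range p, jacobiSym (g j) p)
    {n : ℕ} (hn : Odd n) (hsf : Squarefree n) :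
    ∑ j ∈ range n, jacobiSym (f j) n = ∑ j ∈ range n, jacobiSym (g j) n := by
  induction n using Nat.recOnPosPrimePosCoprime with
  | prime_pow p k hpk hk =>
    obtain rfl : k = 1 := ((Nat.squarefree_pow_iff hpk.ne_one hk.ne').mp hsf).2
    rw [pow_one] at hn ⊢
    exact hp p hpk (by rintro rfl; norm_num at hn)
  | zero => exact absurd hn (by decide)
  | one => simp
  | coprime a b _ _ hab iha ihb =>
    rw [Nat.odd_mul] at hn
    rw [sum_range_jacobiSym_mul_of_coprime hf hab, sum_range_jacobiSym_mul_of_coprime hg hab,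
      iha hn.1 hsf.of_mul_left, ihb hn.2 hsf.of_mul_right]

theorem stmt_8_general (n : ℕ) (hodd : Odd n) (hsf : Squarefree n)
    (c d i : ℤ) :
    ∑ j ∈ Finset.range n, jacobiSym j n * jacobiSym (i ^ 2 + c * i * j + d * j ^ 2) n
      = ∑ j ∈ Finset.range n,
          jacobiSym (-j) n * jacobiSym (i ^ 2 + 2 * c * i * j + (c ^ 2 - 4 * d) * j ^ 2) n := by
  let f : ℤ → ℤ := fun j => j * (i ^ 2 + c * i * j + d * j ^ 2)
  let g : ℤ → ℤ := fun j => -j * (i ^ 2 + 2 * c * i * j + (c ^ 2 - 4 * d) * j ^ 2)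
  have hf : PreservesModEq f := fun m x y h => by simp only [f]; gcongr
  have hg : PreservesModEq g := fun m x y h => by simp only [g]; gcongr
  have hprime (p : ℕ) (hp : p.Prime) (hp2 : p ≠ 2) :
      ∑ j ∈ range p, jacobiSym (f j) p = ∑ j ∈ range p, jacobiSym (g j) p := by
    have : Fact p.Prime := ⟨hp⟩
    have key := sum_quadraticChar_mul_binaryForm (by rwa [ZMod.ringChar_zmod_n]) (c : ZMod p) d i
    refine (sum_range_jacobiSym_eq_sum_quadraticChar p f ?_).trans
      (key.trans (sum_range_jacobiSym_eq_sum_quadraticChar p g ?_).symm)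
    all_goals intro j; simp only [f, g]; push_cast; rfl
  simp only [← jacobiSym.mul_left]
  exact sum_range_jacobiSym_eq_of_forall_prime hf hg hprime hodd hsf

theorem stmt_8 (n : ℕ) (hpos : 0 < n) (hodd : Odd n) (hsf : Squarefree n)
    (c d i : ℤ) :
    ∑ j ∈ Finset.range n, jacobiSym j n * jacobiSym (i ^ 2 + c * i * j + d * j ^ 2) n
      = ∑ j ∈ Finset.range n,
          jacobiSym (-j) n * jacobiSym (i ^ 2 + 2 * c * i * j + (c ^ 2 - 4 * d) * j ^ 2) n :=
  stmt_8_general n hodd hsf c d i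
end

section
/- Let n > 1 be an odd integer that is not squarefree, and let c, d be integers. Then the (n−1)×(n−1) determinant det[((i²+cij+dj²)/n)]_{1≤i,j≤n−1} and the n×n determinant det[((i²+cij+dj²)/n)]_{0≤i,j≤n−1} are both zero, where (·/n) is the Jacobi symbol. -/
lemma jac_congr (n p t : ℕ) (hn : n = p * t) (hp : p ≠ 0) (ht : t ≠ 0) (hpt : p ∣ t) (a b : ℤ)
    (h : (t : ℤ) ∣ (b - a)) : jacobiSym a n = jacobiSym b n := by
  subst hn
  have hmt : a ≡ b [ZMOD t] := (Int.modEq_iff_dvd.mpr h)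
  have hmp : a ≡ b [ZMOD p] := hmt.of_dvd (Int.natCast_dvd_natCast.mpr hpt)
  rw [jacobiSym.mul_right' a hp ht, jacobiSym.mul_right' b hp ht,
    jacobiSym.mod_left' hmp, jacobiSym.mod_left' hmt]

theorem stmt_9 (n : ℕ) (h1 : 1 < n) (hodd : Odd n) (hsf : ¬ Squarefree n)
    (c d : ℤ) :
    Matrix.det (Matrix.of fun i j : Fin (n - 1) =>
        jacobiSym ((((i : ℕ) : ℤ) + 1) ^ 2 + c * (((i : ℕ) : ℤ) + 1) * (((j : ℕ) : ℤ) + 1)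
          + d * (((j : ℕ) : ℤ) + 1) ^ 2) n) = 0 ∧
    Matrix.det (Matrix.of fun i j : Fin n =>
        jacobiSym (((i : ℕ) : ℤ) ^ 2 + c * ((i : ℕ) : ℤ) * ((j : ℕ) : ℤ)
          + d * ((j : ℕ) : ℤ) ^ 2) n) = 0 := by
  obtain ⟨p, hp, hpp⟩ : ∃ p, p.Prime ∧ p * p ∣ n := by
    simpa [Nat.squarefree_iff_prime_squarefree] using hsf
  set t := n / p with htdef
  clear_value t
  have hp0 : p ≠ 0 := hp.pos.ne'
  have hn0 : n ≠ 0 := by omega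
  have hpn : p ∣ n := (dvd_mul_left p p).trans hpp
  have hnpt : n = p * t := by rw [htdef]; exact (Nat.mul_div_cancel' hpn).symm
  have hpt : p ∣ t := by
    have := hpp
    rw [hnpt] at this
    exact (mul_dvd_mul_iff_left hp0).mp this
  have hpodd : p ≠ 2 := by
    rintro rfl
    obtain ⟨k, hk⟩ := hpn
    have := Nat.odd_iff.mp hodd
    omega
  have hp3 : 3 ≤ p := by
    have := hp.two_le
    omega
  have htge : p ≤ t := htdef ▸ (Nat.le_div_iff_mul_le hp.pos).mpr (Nat.le_of_dvd (by omega) hpp)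
  have ht0 : t ≠ 0 := by omega
  have htn1 : t < n - 1 := by
    have h3t : 3 * t ≤ n := by
      calc 3 * t ≤ p * t := Nat.mul_le_mul_right t hp3
      _ = n := hnpt.symm
    omega
  have htn : t < n := by omega
  constructor
  · apply Matrix.det_zero_of_row_eq (i := (⟨0, by omega⟩ : Fin (n-1))) (j := ⟨t, htn1⟩)
    · simp only [ne_eq, Fin.mk.injEq]; omega
    · funext j
      simp only [Matrix.of_apply]
      apply jac_congr n p t hnpt hp0 ht0 hpt
      push_cast
      exact ⟨(t : ℤ) + 2 + c * (j + 1), by ring⟩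
  · apply Matrix.det_zero_of_row_eq (i := (⟨0, by omega⟩ : Fin n)) (j := ⟨t, htn⟩)
    · simp only [ne_eq, Fin.mk.injEq]; omega
    · funext j
      simp only [Matrix.of_apply]
      apply jac_congr n p t hnpt hp0 ht0 hpt
      push_cast
      exact ⟨(t : ℤ) + c * j, by ring⟩
end

section
/- Let q be an odd prime power, χ a nontrivial multiplicative character on F_q, and P(x) ∈ F_q[x] a polynomial with Σ_{x∈F_q} χ(xP(x)) = 0. Then the matrix M = [χ(P*(a,b))]_{a,b∈F_q*}, where P*(x,y) = x^{deg P}·P(y/x) is the homogenization of P, is singular. -/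
/-!
The vector `(χ b)_b` lies in the kernel of `M`. Substituting `b = a c` in row `a` and using
`P*(a, a c) = a^n P(c)`, that row applied to the vector is `χ(a)^(n+1) ∑_{c ≠ 0} χ(c P(c))`,
and the sum vanishes because it differs from `∑_x χ(x P(x))` only by the term `χ(0) = 0`.
-/

open Finset Polynomial Matrix

namespace MulChar

variable {R R' : Type*} [CommMonoid R] [Fintype R] [Fintype Rˣ] [CommSemiring R']

theorem sum_mul_eq_sum_units (χ : MulChar R R') (f : R → R') :
    ∑ x, χ x * f x = ∑ u : Rˣ, χ u * f u :=
  (Fintype.sum_of_injective _ Units.val_injective _ _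
    (fun x hx => by rw [χ.map_nonunit fun ⟨u, hu⟩ => hx ⟨u, hu⟩, zero_mul])
    fun _ => rfl).symm

end MulChar

namespace Polynomial

variable {R : Type*} [CommSemiring R]

def homogenEval (P : R[X]) (a b : R) : R :=
  ∑ s ∈ range (P.natDegree + 1), P.coeff s * a ^ (P.natDegree - s) * b ^ s

theorem homogenEval_mul_right (P : R[X]) (a c : R) :
    P.homogenEval a (a * c) = a ^ P.natDegree * P.eval c := by
  rw [homogenEval, eval_eq_sum_range, mul_sum]
  refine sum_congr rfl fun s hs => ?_
  rw [← Nat.sub_add_cancel (Nat.lt_succ_iff.1 (mem_range.1 hs))]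
  simp only [Nat.add_sub_cancel, mul_pow, pow_add]
  ring

end Polynomial

section

variable {F R : Type*} [CommRing F] [Fintype F] [DecidableEq F] [CommSemiring R]

theorem MulChar.homogenEval_mulVec (χ : MulChar F R) (P : F[X]) :
    (Matrix.of fun a b : Fˣ => χ (P.homogenEval a b)) *ᵥ (fun b : Fˣ => χ b) =
      fun a : Fˣ => χ a ^ (P.natDegree + 1) * ∑ c : Fˣ, χ c * χ (P.eval c) := by
  funext a
  simp only [Matrix.mulVec, dotProduct, Matrix.of_apply, mul_sum]
  refine (Fintype.sum_bijective (a * ·) (Group.mulLeft_bijective a) _ _ fun c => ?_).symm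
  simp only [Units.val_mul, P.homogenEval_mul_right, map_mul, map_pow]
  ring

end

theorem stmt_10_general (F : Type*) [Field F] [Fintype F] [DecidableEq F]
    (χ : MulChar F ℂ)
    (P : Polynomial F) (hsum : ∑ x : F, χ (x * P.eval x) = 0) :
    Matrix.det (Matrix.of fun a b : Fˣ =>
        χ (∑ s ∈ Finset.range (P.natDegree + 1),
            P.coeff s * (a : F) ^ (P.natDegree - s) * (b : F) ^ s)) = 0 := by
  simp only [map_mul, χ.sum_mul_eq_sum_units] at hsum
  rw [← Matrix.exists_mulVec_eq_zero_iff]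
  refine ⟨fun b => χ b, fun h => by simpa using congrFun h 1, ?_⟩
  refine (χ.homogenEval_mulVec P).trans ?_
  funext a
  simp [hsum]

theorem stmt_10 (F : Type*) [Field F] [Fintype F] [DecidableEq F]
    (hodd : Odd (Fintype.card F)) (χ : MulChar F ℂ) (hχ : χ ≠ 1)
    (P : Polynomial F) (hsum : ∑ x : F, χ (x * P.eval x) = 0) :
    Matrix.det (Matrix.of fun a b : Fˣ =>
        χ (∑ s ∈ Finset.range (P.natDegree + 1),
            P.coeff s * (a : F) ^ (P.natDegree - s) * (b : F) ^ s)) = 0 :=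
  stmt_10_general F χ P hsum
end

section
/- Let q be an odd prime power, g ∈ F_q a non-square, and χ a nontrivial multiplicative character on F_q with χ(−1) = 1. Suppose P(x) ∈ F_q[x] satisfies Σ_{x∈F_q} χ(xP(x²)) = 0 and Σ_{x∈F_q} χ(xP(gx²)) = 0. Then the kernel of the matrix M = [χ(P*(a,b))]_{a,b∈F_q*} has dimension at least 2. -/
/-!
For `c ∈ Fˣ` put `v_c(b) = ∑_{c x² = b} χ(x)`. Substituting `x ↦ a x` gives
`(M v_c)(a) = χ(a^(n+1)) ∑_x χ(x P(c a x²))`, where `n = deg P`. The twisted sum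
`∑_x χ(x P(d x²))` changes only by the unit `χ(t)⁻¹` when `d` is replaced by `t² d`, so it is
determined up to a unit by the square class of `d`; as `1` and `g` represent both classes of `Fˣ`,
the hypotheses make it vanish for every `d ≠ 0`, and every `v_c` lies in the kernel of `M`.
Since `χ(-1) = 1`, `v_c(c) = #{x | x² = 1} ≠ 0`, while `v_g(1) = 0` because `g` is a non-square;
hence `v_g` and `v_1` are linearly independent.
-/

open Finset Polynomial
open scoped Matrix

lemma Fintype.sum_units_eq_sum {F M : Type*} [GroupWithZero F] [Fintype F] [Fintype Fˣ]
    [AddCommMonoid M] {f : F → M} (hf : f 0 = 0) : ∑ x : Fˣ, f x = ∑ x, f x := by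
  refine (sum_map univ ⟨_, Units.val_injective⟩ f).symm.trans
    (Finset.sum_subset (subset_univ _) fun x _ hx => ?_)
  obtain rfl : x = 0 := by
    by_contra h
    exact hx (mem_map.mpr ⟨Units.mk0 x h, mem_univ _, rfl⟩)
  exact hf

lemma FiniteField.isSquare_mul_of_not_isSquare {F : Type*} [Field F] [Fintype F] {a b : F}
    (ha : ¬IsSquare a) (hb : ¬IsSquare b) : IsSquare (a * b) := by
  classical
  have ha0 : a ≠ 0 := fun h => ha (h ▸ .zero)
  have hb0 : b ≠ 0 := fun h => hb (h ▸ .zero)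
  rw [← quadraticChar_one_iff_isSquare (mul_ne_zero ha0 hb0), map_mul,
    quadraticChar_neg_one_iff_not_isSquare.mpr ha, quadraticChar_neg_one_iff_not_isSquare.mpr hb]
  norm_num

namespace Polynomial

variable {R : Type*} [CommSemiring R]

noncomputable def evalHomogenization (P : R[X]) (a b : R) : R :=
  ∑ s ∈ range (P.natDegree + 1), P.coeff s * a ^ (P.natDegree - s) * b ^ s

lemma evalHomogenization_mul_right (P : R[X]) (a y : R) :
    P.evalHomogenization a (a * y) = a ^ P.natDegree * P.eval y := by
  rw [evalHomogenization, eval_eq_sum_range, mul_sum]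
  refine sum_congr rfl fun s hs => ?_
  have hpow : a ^ (P.natDegree - s) * a ^ s = a ^ P.natDegree := by
    rw [← pow_add, Nat.sub_add_cancel (Nat.lt_succ_iff.mp (mem_range.mp hs))]
  rw [mul_pow, ← hpow]
  ring

end Polynomial

section CharacterSums

variable {F R : Type*} [Field F] [Fintype F] [CommRing R]

def twistedSum (χ : MulChar F R) (P : F[X]) (d : F) : R :=
  ∑ x : F, χ (x * P.eval (d * x ^ 2))

lemma twistedSum_sq_mul (χ : MulChar F R) (P : F[X]) {c : F} (hc : c ≠ 0) (d : F) :
    twistedSum χ P (c ^ 2 * d) = χ c⁻¹ * twistedSum χ P d := by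
  rw [twistedSum, twistedSum, mul_sum, eq_comm, ← Equiv.sum_comp (Equiv.mulLeft₀ c hc)]
  refine sum_congr rfl fun x _ => ?_
  rw [← map_mul, Equiv.mulLeft₀_apply]
  congr 1
  field_simp

lemma twistedSum_eq_zero {χ : MulChar F R} {P : F[X]} {g : F} (hg : ¬IsSquare g)
    (h_one : twistedSum χ P 1 = 0) (h_g : twistedSum χ P g = 0) {d : F} (hd : d ≠ 0) :
    twistedSum χ P d = 0 := by
  by_cases hsq : IsSquare d
  · obtain ⟨c, rfl⟩ := hsq
    have hc : c ≠ 0 := by rintro rfl; simp at hd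
    rw [show c * c = c ^ 2 * 1 by ring, twistedSum_sq_mul χ P hc, h_one, mul_zero]
  · obtain ⟨c, hc⟩ := FiniteField.isSquare_mul_of_not_isSquare hsq hg
    have hg0 : g ≠ 0 := fun h => hg (h ▸ .zero)
    have hc0 : c ≠ 0 := by
      rintro rfl
      exact mul_ne_zero hd hg0 (by simpa using hc)
    have hd' : d = (c / g) ^ 2 * g := by
      field_simp
      linear_combination hc
    rw [hd', twistedSum_sq_mul χ P (div_ne_zero hc0 hg0), h_g, mul_zero]

variable [DecidableEq F]

noncomputable def homogenizationMatrix (χ : MulChar F R) (P : F[X]) : Matrix Fˣ Fˣ R :=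
  Matrix.of fun a b => χ (P.evalHomogenization a b)

def sqrtCharSum (χ : MulChar F R) (c b : Fˣ) : R :=
  ∑ x ∈ {x : Fˣ | c * x ^ 2 = b}, χ x

lemma homogenizationMatrix_mulVec_sqrtCharSum (χ : MulChar F R) (P : F[X]) (c a : Fˣ) :
    (homogenizationMatrix χ P *ᵥ sqrtCharSum χ c) a =
      χ (a ^ (P.natDegree + 1)) * twistedSum χ P (c * a) := by
  have hswap : (homogenizationMatrix χ P *ᵥ sqrtCharSum χ c) a =
      ∑ x : Fˣ, χ (P.evalHomogenization a (c * x ^ 2)) * χ x := by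
    simp only [Matrix.mulVec, dotProduct, homogenizationMatrix, Matrix.of_apply, sqrtCharSum,
      mul_sum, sum_filter]
    rw [sum_comm]
    simp
  have hzero : χ (0 * P.eval (c * a * (0 : F) ^ 2)) = 0 := by
    rw [zero_mul]
    exact χ.map_nonunit not_isUnit_zero
  rw [hswap, twistedSum, ← Fintype.sum_units_eq_sum (F := F) hzero, mul_sum,
    ← Equiv.sum_comp (Equiv.mulLeft a)]
  refine sum_congr rfl fun x _ => ?_
  have harg : (c : F) * (a * x) ^ 2 = a * (c * a * x ^ 2) := by ring
  simp only [Equiv.coe_mulLeft, Units.val_mul]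
  rw [harg, P.evalHomogenization_mul_right, ← map_mul, ← map_mul]
  congr 1
  ring

lemma sqrtCharSum_mem_ker {χ : MulChar F R} {P : F[X]} {g : F} (hg : ¬IsSquare g)
    (h_one : twistedSum χ P 1 = 0) (h_g : twistedSum χ P g = 0) (c : Fˣ) :
    sqrtCharSum χ c ∈ LinearMap.ker (homogenizationMatrix χ P).mulVecLin := by
  ext a
  rw [Matrix.mulVecLin_apply, homogenizationMatrix_mulVec_sqrtCharSum, ← Units.val_mul,
    twistedSum_eq_zero hg h_one h_g (c * a).ne_zero, mul_zero, Pi.zero_apply]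

lemma sqrtCharSum_self_ne_zero [CharZero R] {χ : MulChar F R} (hχ : χ (-1) = 1) (c : Fˣ) :
    sqrtCharSum χ c c ≠ 0 := by
  have hχx : ∀ x ∈ ({x : Fˣ | c * x ^ 2 = c} : Finset Fˣ), χ x = 1 := by
    intro x hx
    have hx1 : (x : F) ^ 2 = 1 := by
      simpa using congrArg Units.val (mul_eq_left.mp (mem_filter.mp hx).2)
    rcases sq_eq_one_iff.mp hx1 with h | h <;> simp [h, hχ]
  rw [sqrtCharSum, sum_congr rfl hχx, sum_const, nsmul_one, Nat.cast_ne_zero, ← pos_iff_ne_zero,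
    card_pos]
  exact ⟨1, by simp⟩

lemma sqrtCharSum_eq_zero_of_not_isSquare (χ : MulChar F R) {c b : Fˣ}
    (h : ¬IsSquare ((b : F) / c)) : sqrtCharSum χ c b = 0 := by
  refine sum_eq_zero fun x hx => absurd ⟨x, ?_⟩ h
  rw [← (mem_filter.mp hx).2]
  push_cast
  field_simp

lemma linearIndependent_sqrtCharSum {K : Type*} [Field K] [CharZero K] {χ : MulChar F K}
    (hχ : χ (-1) = 1) {u : Fˣ} (hu : ¬IsSquare (u : F)) :
    LinearIndependent K ![sqrtCharSum χ u, sqrtCharSum χ 1] := by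
  refine (LinearIndependent.pair_iff' fun h => sqrtCharSum_self_ne_zero hχ u
    (congrFun h u)).mpr fun t ht => sqrtCharSum_self_ne_zero hχ 1 ?_
  have hu_inv : ¬IsSquare (((1 : Fˣ) : F) / u) := by rwa [Units.val_one, one_div, isSquare_inv]
  rw [← ht, Pi.smul_apply, sqrtCharSum_eq_zero_of_not_isSquare χ hu_inv, smul_zero]

end CharacterSums

theorem stmt_12_general (F : Type*) [Field F] [Fintype F] [DecidableEq F]
    (g : F) (hg : ¬ IsSquare g)
    (χ : MulChar F ℂ) (hχ1 : χ (-1) = 1)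
    (P : Polynomial F)
    (hsum1 : ∑ x : F, χ (x * P.eval (x ^ 2)) = 0)
    (hsum2 : ∑ x : F, χ (x * P.eval (g * x ^ 2)) = 0) :
    2 ≤ Module.finrank ℂ
        (LinearMap.ker (Matrix.mulVecLin (Matrix.of fun a b : Fˣ =>
          χ (∑ s ∈ Finset.range (P.natDegree + 1),
              P.coeff s * (a : F) ^ (P.natDegree - s) * (b : F) ^ s)))) := by
  change 2 ≤ Module.finrank ℂ (LinearMap.ker (homogenizationMatrix χ P).mulVecLin)
  have hg0 : g ≠ 0 := fun h => hg (h ▸ .zero)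
  have h_one : twistedSum χ P 1 = 0 := by simpa [twistedSum] using hsum1
  have hmem := sqrtCharSum_mem_ker hg h_one hsum2
  have hli := linearIndependent_sqrtCharSum hχ1 (u := Units.mk0 g hg0) hg
  calc 2 = Module.finrank ℂ (Submodule.span ℂ (Set.range ![sqrtCharSum χ (Units.mk0 g hg0),
        sqrtCharSum χ 1])) := by rw [finrank_span_eq_card hli, Fintype.card_fin]
    _ ≤ _ := Submodule.finrank_mono <| Submodule.span_le.mpr <| Set.range_subset_iff.mpr <|
        Fin.forall_fin_two.mpr ⟨hmem _, hmem 1⟩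

theorem stmt_12 (F : Type*) [Field F] [Fintype F] [DecidableEq F]
    (hodd : Odd (Fintype.card F)) (g : F) (hg : ¬ IsSquare g)
    (χ : MulChar F ℂ) (hχ : χ ≠ 1) (hχ1 : χ (-1) = 1)
    (P : Polynomial F)
    (hsum1 : ∑ x : F, χ (x * P.eval (x ^ 2)) = 0)
    (hsum2 : ∑ x : F, χ (x * P.eval (g * x ^ 2)) = 0) :
    2 ≤ Module.finrank ℂ
        (LinearMap.ker (Matrix.mulVecLin (Matrix.of fun a b : Fˣ =>
          χ (∑ s ∈ Finset.range (P.natDegree + 1),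
              P.coeff s * (a : F) ^ (P.natDegree - s) * (b : F) ^ s)))) :=
  stmt_12_general F g hg χ hχ1 P hsum1 hsum2
end

section
/- Let q be an odd prime power and m a positive integer with gcd(m, q−1) = 1. Let χ be the nontrivial quadratic character on F_q and a ∈ F_q*. Define P_m(x,a) = Σ_{k=0}^{m−1} C(2m, 2k+1) a^k x^{m−1−k}. Then for every g ∈ F_q*, Σ_{x∈F_q} χ(x·P_m(gx², a)) = 0. -/
/-!
With `d = a g` and `h_d(z) = ∑ₖ C(2m, 2k+1) dᵏ z^(2m-1-2k)`, one has
`h_d(g x) = g^m · x P_m(g x², a)`, so the sum is `χ(g^m) ∑_z χ(h_d(z))`.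
If `d` is a non-square, the involution `z ↦ d / z` satisfies `z^(2m) h_d(d/z) = d^m h_d(z)`,
and `χ(d^m) = -1` for odd `m`, so it reverses the sign of every term.
If `d = e²`, then `2e h_d(z) = (z+e)^(2m) - (z-e)^(2m)`, and the Cayley substitution
`z = e (u+1)/(u-1)` turns the sum into `χ(2e) (1 + ∑_u χ(u^(2m) - 1))`;
since `u ↦ u^m` permutes `F`, this is `χ(2e) (1 + ∑_v χ(v² - 1)) = 0`.
-/

open Finset

theorem Finset.sum_range_two_mul {M : Type*} [AddCommMonoid M] (f : ℕ → M) (n : ℕ) :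
    ∑ i ∈ range (2 * n), f i = ∑ k ∈ range n, (f (2 * k) + f (2 * k + 1)) := by
  induction n with
  | zero => simp
  | succ n ih => rw [Nat.mul_succ, sum_range_succ, sum_range_succ, sum_range_succ, ih, add_assoc]

section BinomOddSum

variable {R : Type*} [CommRing R]

def binomOddSum (m : ℕ) (d z : R) : R :=
  ∑ k ∈ range m, ((2 * m).choose (2 * k + 1) : R) * d ^ k * z ^ (2 * (m - 1 - k) + 1)

theorem binomOddSum_zero_right (m : ℕ) (d : R) : binomOddSum m d (0 : R) = 0 := by
  simp [binomOddSum]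

theorem two_mul_mul_binomOddSum_sq (m : ℕ) (e z : R) :
    2 * e * binomOddSum m (e ^ 2) z = (z + e) ^ (2 * m) - (z - e) ^ (2 * m) := by
  have hsub : (z - e) ^ (2 * m) = (e + -z) ^ (2 * m) := by
    rw [← sub_eq_add_neg, ← neg_sub, (even_two_mul m).neg_pow]
  rw [add_comm z, hsub, add_pow, add_pow, ← sum_sub_distrib, sum_range_succ, sum_range_two_mul,
    binomOddSum, mul_sum]
  simp only [Nat.sub_self, pow_zero, sub_self, add_zero]
  refine sum_congr rfl fun k hk => ?_
  have hk : k < m := mem_range.mp hk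
  have hev : 2 * m - 2 * k = 2 * (m - k) := by omega
  have hodd : 2 * m - (2 * k + 1) = 2 * (m - 1 - k) + 1 := by omega
  rw [hev, hodd, (even_two_mul _).neg_pow, (odd_two_mul_add_one _).neg_pow]
  ring

theorem binomOddSum_mul_mul (m : ℕ) (a g x : R) :
    binomOddSum m (a * g) (g * x) = g ^ m * (x *
      ∑ k ∈ range m, ((2 * m).choose (2 * k + 1) : R) * a ^ k * (g * x ^ 2) ^ (m - 1 - k)) := by
  rw [binomOddSum, mul_sum, mul_sum]
  refine sum_congr rfl fun k hk => ?_
  obtain ⟨j, rfl⟩ : ∃ j, m = k + j + 1 := ⟨m - 1 - k, by have := mem_range.mp hk; omega⟩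
  rw [show k + j + 1 - 1 - k = j by omega]
  ring

end BinomOddSum

theorem pow_mul_binomOddSum_div {F : Type*} [Field F] (m : ℕ) (d : F) {z : F} (hz : z ≠ 0) :
    z ^ (2 * m) * binomOddSum m d (d / z) = d ^ m * binomOddSum m d z := by
  rw [binomOddSum, binomOddSum, mul_sum, mul_sum, ← sum_range_reflect]
  refine sum_congr rfl fun k hk => ?_
  obtain ⟨j, rfl⟩ : ∃ j, m = k + j + 1 := ⟨m - 1 - k, by have := mem_range.mp hk; omega⟩
  have hj : k + j + 1 - 1 - k = j := by omega
  have hk : k + j + 1 - 1 - j = k := by omega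
  rw [hj, hk, div_pow,
    ← Nat.choose_symm_of_eq_add (by ring : 2 * (k + j + 1) = (2 * j + 1) + (2 * k + 1))]
  field_simp
  ring

section FiniteField

variable {F : Type*} [Field F] [Fintype F]

theorem FiniteField.pow_injective_of_coprime {m : ℕ} (hm : m ≠ 0)
    (hcop : (Fintype.card F - 1).Coprime m) : Function.Injective (· ^ m : F → F) := by
  classical
  intro x y hxy
  simp only at hxy
  rcases eq_or_ne x 0 with rfl | hx
  · rw [zero_pow hm, eq_comm, pow_eq_zero_iff hm] at hxy
    exact hxy.symm
  rcases eq_or_ne y 0 with rfl | hy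
  · rwa [zero_pow hm, pow_eq_zero_iff hm] at hxy
  have hunits : (Nat.card Fˣ).Coprime m := by
    rwa [Nat.card_eq_fintype_card, Fintype.card_units]
  have := hunits.pow_left_bijective.injective (a₁ := Units.mk0 x hx) (a₂ := Units.mk0 y hy)
    (Units.ext (by simpa using hxy))
  simpa using congrArg Units.val this

/-- The substitution `z = e (u + 1) / (u - 1)`, written so that the junk value `0⁻¹ = 0` sends
`u = 1` to `z = e`. -/
theorem sum_eq_add_sum_sub_of_cayley {M : Type*} [AddCommGroup M] {e : F} (he : 2 * e ≠ 0)
    {f g : F → M} (hfg : ∀ u ≠ 1, f (e + 2 * e * (u - 1)⁻¹) = g u) :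
    ∑ z, f z = f e + ∑ u, g u - g 1 := by
  classical
  let cayley : F ≃ F :=
    { toFun u := e + 2 * e * (u - 1)⁻¹
      invFun z := 1 + 2 * e * (z - e)⁻¹
      left_inv u := by
        beta_reduce
        rw [add_sub_cancel_left, mul_inv, inv_inv, mul_inv_cancel_left₀ he, add_sub_cancel]
      right_inv z := by
        beta_reduce
        rw [add_sub_cancel_left, mul_inv, inv_inv, mul_inv_cancel_left₀ he, add_sub_cancel] }
  calc ∑ z, f z = ∑ u, f (e + 2 * e * (u - 1)⁻¹) := (Fintype.sum_equiv cayley _ _ fun _ => rfl).symm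
    _ = f e + ∑ u, g u - g 1 := by
      rw [← add_sum_erase _ _ (mem_univ 1), ← add_sum_erase _ _ (mem_univ 1),
        sum_congr rfl fun u hu => hfg u (ne_of_mem_erase hu), sub_self, inv_zero, mul_zero,
        add_zero]
      abel

variable [DecidableEq F]

theorem quadraticChar_sum_sq_sub_one (hF : ringChar F ≠ 2) :
    ∑ v : F, quadraticChar F (v ^ 2 - 1) = -1 := by
  have h2 : (2 : F) ≠ 0 := Ring.two_ne_zero hF
  rw [sum_eq_add_sum_sub_of_cayley (e := 1) (g := quadraticChar F) (by simpa using h2)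
    fun u hu => ?_, quadraticChar_sum_zero hF]
  · simp
  have hu1 : u - 1 ≠ 0 := sub_ne_zero.mpr hu
  have hsq : (1 + 2 * 1 * (u - 1)⁻¹) ^ 2 - 1 = (2 * (u - 1)⁻¹) ^ 2 * u := by
    field_simp
    ring
  rw [hsq, map_mul, quadraticChar_sq_one' (by simp [h2, hu1]), one_mul]

theorem quadraticChar_sum_add_pow_sub_sub_pow (hF : ringChar F ≠ 2) {m : ℕ} (hm : m ≠ 0)
    (hcop : (Fintype.card F - 1).Coprime m) {e : F} (he : e ≠ 0) :
    ∑ z : F, quadraticChar F ((z + e) ^ (2 * m) - (z - e) ^ (2 * m)) = 0 := by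
  have h2e : 2 * e ≠ 0 := mul_ne_zero (Ring.two_ne_zero hF) he
  have hpow : ∑ u : F, quadraticChar F (u ^ (2 * m) - 1) = -1 := by
    rw [← quadraticChar_sum_sq_sub_one hF]
    exact Fintype.sum_bijective _ (FiniteField.pow_injective_of_coprime hm hcop).bijective_of_finite
      _ _ fun u => by rw [← pow_mul, mul_comm]
  rw [sum_eq_add_sum_sub_of_cayley (g := fun u => quadraticChar F (u ^ (2 * m) - 1)) h2e
    fun u hu => ?_, hpow]
  · rw [← two_mul, sub_self, zero_pow (by positivity), sub_zero, pow_mul',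
      quadraticChar_sq_one' (pow_ne_zero m h2e), one_pow, sub_self, quadraticChar_zero]
    ring
  have hu1 : u - 1 ≠ 0 := sub_ne_zero.mpr hu
  have hscale : (e + 2 * e * (u - 1)⁻¹ + e) ^ (2 * m) - (e + 2 * e * (u - 1)⁻¹ - e) ^ (2 * m)
      = ((2 * e * (u - 1)⁻¹) ^ m) ^ 2 * (u ^ (2 * m) - 1) := by
    rw [← pow_mul, mul_comm m 2, mul_sub, ← mul_pow, mul_one]
    congr 2 <;> field_simp <;> ring
  rw [hscale, map_mul, quadraticChar_sq_one' (by simp [h2e, hu1]), one_mul]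

theorem quadraticChar_sum_binomOddSum_sq (hF : ringChar F ≠ 2) {m : ℕ} (hm : m ≠ 0)
    (hcop : (Fintype.card F - 1).Coprime m) {e : F} (he : e ≠ 0) :
    ∑ z : F, quadraticChar F (binomOddSum m (e ^ 2) z) = 0 := by
  have h2e : 2 * e ≠ 0 := mul_ne_zero (Ring.two_ne_zero hF) he
  have hscale (z : F) : quadraticChar F (binomOddSum m (e ^ 2) z) =
      quadraticChar F (2 * e) * quadraticChar F ((z + e) ^ (2 * m) - (z - e) ^ (2 * m)) := by
    rw [← two_mul_mul_binomOddSum_sq, map_mul _ (2 * e), ← mul_assoc, ← sq,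
      quadraticChar_sq_one h2e, one_mul]
  simp only [hscale, ← mul_sum, quadraticChar_sum_add_pow_sub_sub_pow hF hm hcop he, mul_zero]

theorem quadraticChar_sum_binomOddSum_of_not_isSquare {m : ℕ} (hm : Odd m) {d : F}
    (hd : ¬IsSquare d) : ∑ z : F, quadraticChar F (binomOddSum m d z) = 0 := by
  have hd0 : d ≠ 0 := fun h => hd (h ▸ IsSquare.zero)
  have hflip (z : F) :
      quadraticChar F (binomOddSum m d (d / z)) = -quadraticChar F (binomOddSum m d z) := by
    rcases eq_or_ne z 0 with rfl | hz
    · simp [binomOddSum_zero_right]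
    have h := congrArg (quadraticChar F) (pow_mul_binomOddSum_div m d hz)
    rwa [map_mul, map_mul, pow_mul, map_pow, quadraticChar_sq_one' hz, one_pow, one_mul, map_pow,
      quadraticChar_neg_one_iff_not_isSquare.mpr hd, hm.neg_one_pow, neg_one_mul] at h
  have hinv : Function.Involutive (d / · : F → F) := fun z => div_div_cancel₀ hd0
  have hsum : ∑ z, quadraticChar F (binomOddSum m d (d / z)) =
      ∑ z, quadraticChar F (binomOddSum m d z) :=
    Fintype.sum_bijective _ hinv.bijective _ _ fun _ => rfl
  rw [sum_congr rfl fun z _ => hflip z, sum_neg_distrib, neg_eq_iff_add_eq_zero] at hsum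
  linarith

theorem quadraticChar_sum_binomOddSum (hF : ringChar F ≠ 2) {m : ℕ} (hm : Odd m)
    (hcop : (Fintype.card F - 1).Coprime m) {d : F} (hd : d ≠ 0) :
    ∑ z : F, quadraticChar F (binomOddSum m d z) = 0 := by
  by_cases hsq : IsSquare d
  · obtain ⟨e, rfl⟩ := hsq
    rw [← sq]
    exact quadraticChar_sum_binomOddSum_sq hF hm.pos.ne' hcop (by simpa using hd)
  · exact quadraticChar_sum_binomOddSum_of_not_isSquare hm hsq

end FiniteField

theorem stmt_13_general (F : Type*) [Field F] [Fintype F] [DecidableEq F]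
    (hodd : Odd (Fintype.card F)) (m : ℕ)
    (hgcd : Nat.gcd m (Fintype.card F - 1) = 1) (a : F) (ha : a ≠ 0)
    (g : F) (hg : g ≠ 0) :
    ∑ x : F, quadraticChar F (x *
        ∑ k ∈ Finset.range m,
          (Nat.choose (2 * m) (2 * k + 1) : F) * a ^ k * (g * x ^ 2) ^ (m - 1 - k)) = 0 := by
  have hF : ringChar F ≠ 2 := fun h => by
    simp [Nat.odd_iff, FiniteField.even_card_iff_char_two.mp h] at hodd
  have hcop : (Fintype.card F - 1).Coprime m := Nat.Coprime.symm hgcd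
  have hmodd : Odd m := Nat.coprime_two_right.mp <|
    Nat.Coprime.coprime_dvd_right (Nat.Odd.sub_odd hodd odd_one).two_dvd hgcd
  have hχg : quadraticChar F (g ^ m) * quadraticChar F (g ^ m) = 1 := by
    rw [← sq, quadraticChar_sq_one (pow_ne_zero m hg)]
  have hpoint (x : F) : quadraticChar F (x *
      ∑ k ∈ range m, ((2 * m).choose (2 * k + 1) : F) * a ^ k * (g * x ^ 2) ^ (m - 1 - k)) =
      quadraticChar F (g ^ m) * quadraticChar F (binomOddSum m (a * g) (g * x)) := by
    rw [binomOddSum_mul_mul, map_mul (quadraticChar F) (g ^ m), ← mul_assoc, hχg, one_mul]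
  have hsubst : ∑ x : F, quadraticChar F (binomOddSum m (a * g) (g * x)) =
      ∑ z : F, quadraticChar F (binomOddSum m (a * g) z) :=
    Fintype.sum_bijective _ (mulLeft_bijective₀ g hg) _ _ fun _ => rfl
  rw [sum_congr rfl fun x _ => hpoint x, ← mul_sum, hsubst,
    quadraticChar_sum_binomOddSum hF hmodd hcop (mul_ne_zero ha hg), mul_zero]

theorem stmt_13 (F : Type*) [Field F] [Fintype F] [DecidableEq F]
    (hodd : Odd (Fintype.card F)) (m : ℕ) (hm : 0 < m)
    (hgcd : Nat.gcd m (Fintype.card F - 1) = 1) (a : F) (ha : a ≠ 0)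
    (g : F) (hg : g ≠ 0) :
    ∑ x : F, quadraticChar F (x *
        ∑ k ∈ Finset.range m,
          (Nat.choose (2 * m) (2 * k + 1) : F) * a ^ k * (g * x ^ 2) ^ (m - 1 - k)) = 0 :=
  stmt_13_general F hodd m hgcd a ha g hg
end

section
/- Let p be an odd prime, n a positive integer, q = pⁿ, and H(x) = Σ_{k=0}^{2(p−1)} c_k x^k ∈ F_q[x]. Then Σ_{x∈F_q} H(x)^{1+p+⋯+p^{n−1}} = −c_{p−1}^{1+p+⋯+p^{n−1}} − c_{2(p−1)}^{1+p+⋯+p^{n−1}}. -/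
/-!
Since `N = 1 + p + ⋯ + p^(n-1)`, Frobenius gives `H(x)^N = ∏ᵢ H(x)^(pⁱ) = ∏ᵢ ∑ₖ cₖ^(pⁱ) x^(k pⁱ)`,
so `H(x)^N` expands into monomials `x^(∑ᵢ gᵢ pⁱ)` indexed by digit vectors `g` with
`gᵢ ≤ 2(p-1)`. Summing over `x ∈ F_q` kills every monomial whose exponent is not a positive
multiple of `q - 1`. The exponent is at most `2(q-1)`, and a carry argument shows that it equals
`q - 1` or `2(q-1)` only for the constant vectors `p - 1` and `2(p-1)`, each contributing `-c^N`.
-/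

open Finset

theorem FiniteField.sum_pow_eq_ite (K : Type*) [Field K] [Fintype K] (m : ℕ) :
    ∑ x : K, x ^ m = if m ≠ 0 ∧ Fintype.card K - 1 ∣ m then -1 else 0 := by
  classical
  rcases eq_or_ne m 0 with rfl | hm
  · simp
  have hunits : ∑ x : K, x ^ m = ∑ x : Kˣ, (x : K) ^ m := by
    refine ((sum_subset (subset_univ _) fun x _ hx => ?_).symm.trans
      (sum_map univ ⟨((↑) : Kˣ → K), Units.val_injective⟩ (· ^ m)))
    obtain rfl : x = 0 := by
      by_contra h0
      exact hx (mem_map_of_mem _ (mem_univ (Units.mk0 x h0)))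
    exact zero_pow hm
  rw [hunits, FiniteField.sum_pow_units, if_congr (and_iff_right hm).symm rfl rfl]

theorem sum_mul_pow_pow_geom_sum_eq_sum_piFinset {R : Type*} [CommSemiring R] (p : ℕ)
    [ExpChar R p] (s : Finset ℕ) (c : ℕ → R) (x : R) (n : ℕ) :
    (∑ k ∈ s, c k * x ^ k) ^ (∑ i ∈ range n, p ^ i) =
      ∑ g ∈ Fintype.piFinset fun _ : Fin n => s,
        (∏ i, c (g i) ^ p ^ (i : ℕ)) * x ^ ∑ i, g i * p ^ (i : ℕ) := by
  have hfrob (i : ℕ) :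
      (∑ k ∈ s, c k * x ^ k) ^ p ^ i = ∑ k ∈ s, c k ^ p ^ i * x ^ (k * p ^ i) := by
    simp only [sum_pow_char_pow, mul_pow, ← pow_mul]
  rw [← Fin.sum_univ_eq_sum_range (p ^ ·) n, ← prod_pow_eq_pow_sum]
  simp only [hfrob, prod_univ_sum, prod_mul_distrib, prod_pow_eq_pow_sum]

namespace Nat

theorem sum_pred_mul_pow (p n : ℕ) : ∑ i : Fin n, (p - 1) * p ^ (i : ℕ) = p ^ n - 1 := by
  rcases p with _ | k
  · rcases n with _ | n <;> simp
  · rw [← mul_sum, Fin.sum_univ_eq_sum_range (fun i => (k + 1) ^ i), add_tsub_cancel_right,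
      ← geom_sum_mul_add k n, mul_comm, add_tsub_cancel_right]

theorem sum_two_mul_pred_mul_pow (p n : ℕ) :
    ∑ i : Fin n, 2 * (p - 1) * p ^ (i : ℕ) = 2 * (p ^ n - 1) := by
  rw [← sum_pred_mul_pow, mul_sum]
  simp only [mul_assoc]

theorem eq_pred_and_eq_of_add_mul_eq {p a A B : ℕ} (hp : 0 < p) (ha : a ≤ 2 * (p - 1))
    (h : a + p * A = p - 1 + p * B) : a = p - 1 ∧ A = B := by
  rcases lt_trichotomy A B with hAB | rfl | hAB
  · have := Nat.mul_le_mul_left p hAB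
    rw [mul_add_one] at this
    omega
  · omega
  · have := Nat.mul_le_mul_left p hAB
    rw [mul_add_one] at this
    omega

/-- A digit `gᵢ ≤ 2(p-1)` carries at most one into the next place, and a lowest digit `p - 1`
leaves no room for that carry. -/
theorem eq_pred_of_sum_mul_pow_eq {p : ℕ} (hp : 0 < p) :
    ∀ {n : ℕ} {g : Fin n → ℕ}, (∀ i, g i ≤ 2 * (p - 1)) →
      ∑ i, g i * p ^ (i : ℕ) = p ^ n - 1 → ∀ i, g i = p - 1
  | 0, _, _, _ => fun i => i.elim0
  | n + 1, g, hg, h => by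
    have hpow : p - 1 + p * (p ^ n - 1) = p ^ (n + 1) - 1 := by
      have : p ≤ p * p ^ n := Nat.le_mul_of_pos_right p (Nat.pow_pos hp)
      rw [Nat.mul_sub_one, pow_succ']
      omega
    have hsplit :
        g 0 + p * ∑ i : Fin n, g i.succ * p ^ (i : ℕ) = p - 1 + p * (p ^ n - 1) := by
      rw [hpow, ← h, Fin.sum_univ_succ, mul_sum]
      simp only [Fin.val_zero, pow_zero, mul_one, Fin.val_succ, pow_succ', mul_left_comm]
    obtain ⟨h0, htail⟩ := eq_pred_and_eq_of_add_mul_eq hp (hg 0) hsplit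
    exact Fin.cases h0 (eq_pred_of_sum_mul_pow_eq hp (fun i => hg i.succ) htail)

theorem eq_of_sum_mul_pow_eq_sum_mul_pow {p n M : ℕ} (hp : 0 < p) {g : Fin n → ℕ}
    (hg : ∀ i, g i ≤ M) (h : ∑ i, g i * p ^ (i : ℕ) = ∑ i : Fin n, M * p ^ (i : ℕ)) :
    g = fun _ => M :=
  funext fun i => Nat.eq_of_mul_eq_mul_right (Nat.pow_pos hp) <|
    (sum_eq_sum_iff_of_le fun j _ => Nat.mul_le_mul_right _ (hg j)).mp h i (mem_univ i)

theorem eq_pred_or_eq_two_mul_pred_of_dvd {p n : ℕ} (hp : 0 < p) {g : Fin n → ℕ}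
    (hg : ∀ i, g i ≤ 2 * (p - 1)) (h0 : ∑ i, g i * p ^ (i : ℕ) ≠ 0)
    (hdvd : p ^ n - 1 ∣ ∑ i, g i * p ^ (i : ℕ)) :
    g = (fun _ => p - 1) ∨ g = (fun _ => 2 * (p - 1)) := by
  obtain ⟨t, ht⟩ := hdvd
  have hle : ∑ i, g i * p ^ (i : ℕ) ≤ 2 * (p ^ n - 1) := by
    rw [← sum_two_mul_pred_mul_pow]
    exact sum_le_sum fun i _ => Nat.mul_le_mul_right _ (hg i)
  have hq : 0 < p ^ n - 1 := Nat.pos_of_ne_zero fun hq => h0 (by rw [ht, hq, zero_mul])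
  have ht2 : t ≤ 2 := Nat.le_of_mul_le_mul_left (by rw [← ht, mul_comm]; exact hle) hq
  have ht0 : t ≠ 0 := by
    rintro rfl
    exact h0 ht
  obtain rfl | rfl : t = 1 ∨ t = 2 := by omega
  · exact .inl <| funext <| eq_pred_of_sum_mul_pow_eq hp hg (by rw [ht, mul_one])
  · refine .inr <| eq_of_sum_mul_pow_eq_sum_mul_pow hp hg ?_
    rw [ht, sum_two_mul_pred_mul_pow, mul_comm]

end Nat

theorem FiniteField.sum_pow_sum_mul_pow_eq_zero {K : Type*} [Field K] [Fintype K] {p n : ℕ}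
    (hp : 0 < p) (hK : Fintype.card K = p ^ n) {g : Fin n → ℕ} (hg : ∀ i, g i ≤ 2 * (p - 1))
    (h1 : g ≠ fun _ => p - 1) (h2 : g ≠ fun _ => 2 * (p - 1)) :
    ∑ x : K, x ^ ∑ i, g i * p ^ (i : ℕ) = 0 := by
  rw [sum_pow_eq_ite, hK, if_neg]
  rintro ⟨h0, hdvd⟩
  rcases Nat.eq_pred_or_eq_two_mul_pred_of_dvd hp hg h0 hdvd with h | h
  exacts [h1 h, h2 h]

theorem stmt_17_general (p : ℕ) (hp : p.Prime) (n : ℕ)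
    (F : Type*) [Field F] [Fintype F] (hcard : Fintype.card F = p ^ n)
    (c : ℕ → F) :
    ∑ x : F, (∑ k ∈ Finset.range (2 * (p - 1) + 1), c k * x ^ k)
        ^ (∑ i ∈ Finset.range n, p ^ i)
      = -(c (p - 1)) ^ (∑ i ∈ Finset.range n, p ^ i)
        - (c (2 * (p - 1))) ^ (∑ i ∈ Finset.range n, p ^ i) := by
  have : Fact p.Prime := ⟨hp⟩
  have : CharP F p := charP_of_card_eq_prime_pow hcard
  have hp2 := hp.two_le
  have hq : 2 ≤ p ^ n := hcard ▸ Fintype.one_lt_card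
  have hn : 0 < n := Nat.pos_of_ne_zero fun hn => by simp [hn] at hq
  have hmem (k : ℕ) (hk : k ≤ 2 * (p - 1)) :
      (fun _ => k) ∈ Fintype.piFinset fun _ : Fin n => range (2 * (p - 1) + 1) :=
    Fintype.mem_piFinset.mpr fun _ => mem_range.mpr (Nat.lt_succ_of_le hk)
  have hne : (fun _ : Fin n => p - 1) ≠ fun _ => 2 * (p - 1) := fun h => by
    have := congrFun h ⟨0, hn⟩
    omega
  have hprod (k : ℕ) : ∏ i : Fin n, c k ^ p ^ (i : ℕ) = c k ^ ∑ i ∈ range n, p ^ i := by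
    rw [prod_pow_eq_pow_sum, Fin.sum_univ_eq_sum_range (p ^ ·)]
  simp only [sum_mul_pow_pow_geom_sum_eq_sum_piFinset p]
  rw [sum_comm]
  simp only [← mul_sum]
  rw [sum_eq_add_of_mem _ _ (hmem _ (by omega)) (hmem _ le_rfl) hne fun g hg ⟨h1, h2⟩ => by
    rw [FiniteField.sum_pow_sum_mul_pow_eq_zero hp.pos hcard
      (fun i => Nat.le_of_lt_succ (mem_range.mp (Fintype.mem_piFinset.mp hg i))) h1 h2, mul_zero]]
  rw [hprod, hprod, Nat.sum_pred_mul_pow, Nat.sum_two_mul_pred_mul_pow,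
    FiniteField.sum_pow_eq_ite, FiniteField.sum_pow_eq_ite, hcard,
    if_pos ⟨by omega, dvd_rfl⟩, if_pos ⟨by omega, dvd_mul_left _ _⟩]
  ring

theorem stmt_17 (p : ℕ) (hp : p.Prime) (hp2 : p ≠ 2) (n : ℕ) (hn : 0 < n)
    (F : Type*) [Field F] [Fintype F] (hcard : Fintype.card F = p ^ n)
    (c : ℕ → F) :
    ∑ x : F, (∑ k ∈ Finset.range (2 * (p - 1) + 1), c k * x ^ k)
        ^ (∑ i ∈ Finset.range n, p ^ i)
      = -(c (p - 1)) ^ (∑ i ∈ Finset.range n, p ^ i)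
        - (c (2 * (p - 1))) ^ (∑ i ∈ Finset.range n, p ^ i) :=
  stmt_17_general p hp n F hcard c
end

section
/- Let p be a prime with p ≡ 1 (mod 4), and let a, b, c be nonzero elements of F_p. Write A_p = Σ_{x∈F_p} χ_p(ax⁵+bx³+cx), where χ_p is the Legendre symbol as a map to the integers. Then, as elements of F_p, A_p mod p equals −C((p−1)/2, (p−1)/4) · b^{(p−1)/4} · (a^{(p−1)/4} + c^{(p−1)/4}) · f(ac/b²), where f(z) = 1 + Σ_{k=1}^{⌊(p−1)/8⌋} ∏_{j=0}^{k−1} ((8j+1)(8j+5))/(4(j+1)(4j+3)) · z^k is a polynomial over F_p. -/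
/-!
Write `p = 4T + 1`. By Euler's criterion `χ(y) = y ^ (2T)` in `𝔽_p`, and `∑ₓ x ^ N` is `-1` when
`0 < N` and `p - 1 ∣ N`, and `0` otherwise. Expanding `(a x⁵ + b x³ + c x) ^ (2T)` trinomially, the
monomial `aⁱ b^(2T-i-j) cʲ` carries `x ^ (6T + 2i - 2j)`, so only the families `j = i + T` and
`i = j + T` survive, and they are exchanged by `a ↔ c`. The surviving coefficients
`(2T)! / (k! (T+k)! (T-2k)!)` have consecutive ratios `(T-2k)(T-2k-1) / ((k+1)(T+k+1))`, which
become `(8k+1)(8k+5) / (4(k+1)(4k+3))` modulo `p`, where `4T = -1`.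
-/

open Finset
open scoped Nat

theorem FiniteField.sum_pow_of_ne_zero {K : Type*} [Field K] [Fintype K] {N : ℕ} (hN : N ≠ 0) :
    ∑ x : K, x ^ N = if Fintype.card K - 1 ∣ N then -1 else 0 := by
  classical
  have hunits : univ.map ⟨((↑) : Kˣ → K), Units.val_injective⟩ = univ \ {0} := by
    ext x
    simpa using ⟨fun ⟨u, hu⟩ => hu ▸ u.ne_zero, fun h => ⟨Units.mk0 x h, rfl⟩⟩
  rw [← sum_sdiff (subset_univ {0}), sum_singleton, zero_pow hN, add_zero, ← hunits, sum_map]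
  exact FiniteField.sum_pow_units K N

theorem Nat.choose_mul_choose_sub_eq_zero {n i j : ℕ} (h : n < i + j) :
    n.choose i * (n - i).choose j = 0 := by
  rcases le_or_gt i n with hi | hi
  · rw [Nat.choose_eq_zero_of_lt (show n - i < j by omega), mul_zero]
  · rw [Nat.choose_eq_zero_of_lt hi, zero_mul]

theorem Nat.choose_mul_choose_sub_comm (n i j : ℕ) :
    n.choose i * (n - i).choose j = n.choose j * (n - j).choose i := by
  rcases le_or_gt (i + j) n with h | h
  · rw [← Nat.choose_symm (show i ≤ n by omega), Nat.choose_mul (show j ≤ n - i by omega),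
      Nat.choose_symm_of_eq_add (show n - j = (n - i - j) + i by omega)]
  · rw [Nat.choose_mul_choose_sub_eq_zero h, Nat.choose_mul_choose_sub_eq_zero (by omega)]

theorem Nat.choose_mul_choose_sub_mul_factorials {n i j : ℕ} (h : i + j ≤ n) :
    n.choose i * (n - i).choose j * i ! * j ! * (n - i - j)! = n ! := by
  rw [← Nat.choose_mul_factorial_mul_factorial (show i ≤ n by omega),
    ← Nat.choose_mul_factorial_mul_factorial (show j ≤ n - i by omega)]
  ring

theorem Nat.choose_mul_choose_sub_succ_mul (T k : ℕ) (h : 2 * k + 2 ≤ T) :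
    (2 * T).choose (k + 1) * (2 * T - (k + 1)).choose (k + 1 + T) * ((k + 1) * (k + 1 + T))
      = (2 * T).choose k * (2 * T - k).choose (k + T) * ((T - 2 * k) * (T - 2 * k - 1)) := by
  obtain ⟨u, rfl⟩ : ∃ u, T = u + 2 * k + 2 := ⟨T - 2 * k - 2, by omega⟩
  have h₁ := Nat.choose_mul_choose_sub_mul_factorials
    (n := 2 * (u + 2 * k + 2)) (i := k + 1) (j := k + 1 + (u + 2 * k + 2)) (by omega)
  have h₀ := Nat.choose_mul_choose_sub_mul_factorials
    (n := 2 * (u + 2 * k + 2)) (i := k) (j := k + (u + 2 * k + 2)) (by omega)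
  rw [show 2 * (u + 2 * k + 2) - (k + 1) - (k + 1 + (u + 2 * k + 2)) = u by omega,
    show k + 1 + (u + 2 * k + 2) = k + (u + 2 * k + 2) + 1 by omega] at h₁
  rw [show 2 * (u + 2 * k + 2) - k - (k + (u + 2 * k + 2)) = u + 2 by omega] at h₀
  rw [show u + 2 * k + 2 - 2 * k = u + 2 by omega, show u + 2 - 1 = u + 1 by omega,
    show k + 1 + (u + 2 * k + 2) = k + (u + 2 * k + 2) + 1 by omega]
  apply Nat.eq_of_mul_eq_mul_right (by positivity : 0 < k ! * (k + (u + 2 * k + 2))! * u !)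
  rw [Nat.factorial_succ, Nat.factorial_succ] at h₁
  rw [Nat.factorial_succ, Nat.factorial_succ] at h₀
  linear_combination h₁ - h₀

section Trinomial

variable {R : Type*} [CommSemiring R]

def trinomialTerm (n : ℕ) (u v w : R) (i j : ℕ) : R :=
  (n.choose i * (n - i).choose j : ℕ) * u ^ i * v ^ (n - i - j) * w ^ j

theorem trinomialTerm_comm (n : ℕ) (u v w : R) (i j : ℕ) :
    trinomialTerm n u v w i j = trinomialTerm n w v u j i := by
  rw [trinomialTerm, trinomialTerm, Nat.choose_mul_choose_sub_comm, Nat.sub_right_comm]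
  ring

theorem trinomialTerm_eq_zero {n i j : ℕ} (h : n < i + j) (u v w : R) :
    trinomialTerm n u v w i j = 0 := by
  rw [trinomialTerm, Nat.choose_mul_choose_sub_eq_zero h, Nat.cast_zero, zero_mul, zero_mul,
    zero_mul]

theorem trinomialTerm_mul_mul_mul (n : ℕ) (u v w x y z : R) (i j : ℕ) :
    trinomialTerm n (u * x) (v * y) (w * z) i j
      = trinomialTerm n u v w i j * (x ^ i * y ^ (n - i - j) * z ^ j) := by
  simp only [trinomialTerm, mul_pow]
  ring

theorem add_add_pow_eq_sum_trinomialTerm (u v w : R) (n : ℕ) :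
    (u + v + w) ^ n = ∑ i ∈ range (n + 1), ∑ j ∈ range (n + 1), trinomialTerm n u v w i j := by
  rw [add_assoc, add_comm v, add_pow]
  refine sum_congr rfl fun i hi => ?_
  have hsub : range (n - i + 1) ⊆ range (n + 1) := range_subset_range.2 (by omega)
  rw [add_pow, mul_sum, sum_mul, ← sum_subset hsub fun j _ hj => trinomialTerm_eq_zero
    (by simp only [mem_range] at hj; omega) u v w]
  refine sum_congr rfl fun j _ => ?_
  rw [trinomialTerm, Nat.cast_mul]
  ring

end Trinomial

theorem sum_range_sum_range_ite_eq_add {M : Type*} [AddCommMonoid M] (T : ℕ) (f : ℕ → ℕ → M)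
    (hf : ∀ i j, 2 * T < i + j → f i j = 0) :
    ∑ i ∈ range (2 * T + 1), ∑ j ∈ range (2 * T + 1), (if j = i + T then f i j else 0)
      = ∑ k ∈ range (T / 2 + 1), f k (k + T) := by
  simp only [sum_ite_eq', mem_range]
  rw [← sum_subset (range_subset_range.2 (by omega : T / 2 + 1 ≤ 2 * T + 1))]
  · exact sum_congr rfl fun k hk => if_pos (by simp only [mem_range] at hk; omega)
  · intro k _ hk
    simp only [mem_range] at hk
    rw [hf k (k + T) (by omega), ite_self]

section QuinticCharacterSum

variable {K : Type*} [Field K] [Fintype K] [DecidableEq K] {T : ℕ}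

theorem sum_pow_quintic_monomial (hK : Fintype.card K = 4 * T + 1) {i j : ℕ}
    (h : i + j ≤ 2 * T) :
    ∑ x : K, (x ^ 5) ^ i * (x ^ 3) ^ (2 * T - i - j) * x ^ j
      = -((if j = i + T then 1 else 0) + (if i = j + T then 1 else 0)) := by
  have hT : 0 < T := by have := Fintype.one_lt_card (α := K); omega
  generalize hm : 2 * T - i - j = m
  have hexp : ∀ x : K, (x ^ 5) ^ i * (x ^ 3) ^ m * x ^ j = x ^ (5 * i + 3 * m + j) := by
    intro x; rw [← pow_mul, ← pow_mul, ← pow_add, ← pow_add]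
  have hdvd : 4 * T ∣ 5 * i + 3 * m + j ↔ j = i + T ∨ i = j + T := by
    constructor
    · rintro ⟨q, hq⟩
      have hq3 : q < 3 := by by_contra! hq3; nlinarith [show i + j + m = 2 * T by omega]
      interval_cases q <;> omega
    · rintro (h | h)
      exacts [⟨1, by omega⟩, ⟨2, by omega⟩]
  simp only [hexp]
  rw [FiniteField.sum_pow_of_ne_zero (show 5 * i + 3 * m + j ≠ 0 by omega), hK, Nat.add_sub_cancel]
  simp only [hdvd]
  split_ifs <;> first | omega | norm_num

theorem sum_quadraticChar_quintic (hK : Fintype.card K = 4 * T + 1) (a b c : K) :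
    ((∑ x : K, quadraticChar K (a * x ^ 5 + b * x ^ 3 + c * x) : ℤ) : K)
      = -∑ k ∈ range (T / 2 + 1),
          (trinomialTerm (2 * T) a b c k (k + T) + trinomialTerm (2 * T) c b a k (k + T)) := by
  have hchar : ringChar K ≠ 2 := by
    rw [Ne, FiniteField.even_card_iff_char_two, hK]; omega
  have hT : 0 < T := by have := Fintype.one_lt_card (α := K); omega
  have hterm : ∀ i j, trinomialTerm (2 * T) a b c i j
      * ∑ x : K, (x ^ 5) ^ i * (x ^ 3) ^ (2 * T - i - j) * x ^ j
      = -((if j = i + T then trinomialTerm (2 * T) a b c i j else 0)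
          + (if i = j + T then trinomialTerm (2 * T) c b a j i else 0)) := by
    intro i j
    rcases le_or_gt (i + j) (2 * T) with h | h
    · rw [sum_pow_quintic_monomial hK h, ← trinomialTerm_comm]
      split_ifs <;> first | omega | simp
    · simp [trinomialTerm_eq_zero h, ← trinomialTerm_comm]
  calc ((∑ x : K, quadraticChar K (a * x ^ 5 + b * x ^ 3 + c * x) : ℤ) : K)
      = ∑ x : K, (a * x ^ 5 + b * x ^ 3 + c * x) ^ (2 * T) := by
        push_cast
        simp only [quadraticChar_eq_pow_of_char_ne_two' hchar, hK]
        congr! 2; omega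
    _ = ∑ i ∈ range (2 * T + 1), ∑ j ∈ range (2 * T + 1), trinomialTerm (2 * T) a b c i j
          * ∑ x : K, (x ^ 5) ^ i * (x ^ 3) ^ (2 * T - i - j) * x ^ j := by
        simp only [add_add_pow_eq_sum_trinomialTerm, trinomialTerm_mul_mul_mul, mul_sum]
        rw [sum_comm]
        exact sum_congr rfl fun i _ => sum_comm
    _ = _ := by
        simp only [hterm, sum_neg_distrib, sum_add_distrib]
        rw [sum_comm (f := fun i j => if i = j + T then _ else _),
          sum_range_sum_range_ite_eq_add T _ fun i j h => trinomialTerm_eq_zero h a b c,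
          sum_range_sum_range_ite_eq_add T _ fun i j h => trinomialTerm_eq_zero h c b a, neg_add]

end QuinticCharacterSum

theorem ZMod.natCast_ne_zero_of_pos_of_lt {p n : ℕ} (h₀ : 0 < n) (hp : n < p) :
    (n : ZMod p) ≠ 0 := by
  rw [Ne, ZMod.natCast_eq_zero_iff]
  exact fun h => absurd (Nat.le_of_dvd h₀ h) (by omega)

theorem ZMod.choose_mul_choose_sub_eq_prod {p T : ℕ} [Fact p.Prime] (hp : p = 4 * T + 1) {k : ℕ}
    (hk : 2 * k ≤ T) :
    (((2 * T).choose k * (2 * T - k).choose (k + T) : ℕ) : ZMod p)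
      = ((2 * T).choose T : ZMod p) * ∏ j ∈ range k, (((8 * j + 1) * (8 * j + 5) : ℕ) : ZMod p)
          / (((4 * (j + 1) * (4 * j + 3) : ℕ) : ZMod p)) := by
  induction k with
  | zero => simp
  | succ k ih =>
    have hden : ((4 * (k + 1) * (4 * k + 3) : ℕ) : ZMod p) ≠ 0 := by
      rw [Nat.cast_mul, Nat.cast_mul]
      refine mul_ne_zero (mul_ne_zero ?_ ?_) ?_ <;>
        exact ZMod.natCast_ne_zero_of_pos_of_lt (by omega) (by omega)
    have hτ : ((4 * T + 1 : ℕ) : ZMod p) = 0 := by rw [ZMod.natCast_eq_zero_iff, hp]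
    push_cast at hτ
    have hratio :=
      congrArg (Nat.cast : ℕ → ZMod p) (Nat.choose_mul_choose_sub_succ_mul T k (by omega))
    rw [prod_range_succ, ← mul_assoc, ← ih (by omega), ← mul_div_assoc, eq_div_iff hden]
    push_cast [Nat.cast_sub (show 1 ≤ T - 2 * k by omega),
      Nat.cast_sub (show 2 * k ≤ T by omega)] at hratio ⊢
    set M₁ := ((2 * T).choose (k + 1) : ZMod p) * ((2 * T - (k + 1)).choose (k + 1 + T) : ZMod p)
    set M₀ := ((2 * T).choose k : ZMod p) * ((2 * T - k).choose (k + T) : ZMod p)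
    -- Times 16, with `4T = -1`: `16(k+1)(k+1+T) = 4(k+1)(4k+3)`, `16(T-2k)(T-2k-1) = (8k+1)(8k+5)`.
    linear_combination 16 * hratio + (-4 * M₁ * (k + 1) + M₀ * (4 * T - 5 - 16 * k)) * hτ

theorem mul_pow_add_swap_eq_mul_div_sq_pow {K : Type*} [Field K] {b : K} (hb : b ≠ 0)
    (m a c : K) {T k : ℕ} (hk : 2 * k ≤ T) :
    m * a ^ k * b ^ (T - 2 * k) * c ^ (k + T) + m * c ^ k * b ^ (T - 2 * k) * a ^ (k + T)
      = m * b ^ T * (a ^ T + c ^ T) * (a * c / b ^ 2) ^ k := by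
  obtain ⟨e, rfl⟩ : ∃ e, T = e + 2 * k := ⟨T - 2 * k, by omega⟩
  rw [Nat.add_sub_cancel, div_pow, ← pow_mul, mul_comm 2 k, pow_add b]
  field_simp
  ring

theorem ZMod.trinomialTerm_add_trinomialTerm_swap {p T : ℕ} [Fact p.Prime] (hp : p = 4 * T + 1)
    {a b c : ZMod p} (hb : b ≠ 0) {k : ℕ} (hk : 2 * k ≤ T) :
    trinomialTerm (2 * T) a b c k (k + T) + trinomialTerm (2 * T) c b a k (k + T)
      = (Nat.choose (2 * T) T : ZMod p) * b ^ T * (a ^ T + c ^ T)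
          * ((∏ j ∈ range k, (((8 * j + 1) * (8 * j + 5) : ℕ) : ZMod p)
              / (((4 * (j + 1) * (4 * j + 3) : ℕ) : ZMod p)))
            * (a * c / b ^ 2) ^ k) := by
  rw [trinomialTerm, trinomialTerm, show 2 * T - k - (k + T) = T - 2 * k by omega,
    ZMod.choose_mul_choose_sub_eq_prod hp hk, mul_pow_add_swap_eq_mul_div_sq_pow hb _ _ _ hk]
  ring

theorem stmt_18_general (p : ℕ) [Fact p.Prime] (hp : p % 4 = 1)
    (a b c : ZMod p) (hb : b ≠ 0) :
    ((∑ x : ZMod p, quadraticChar (ZMod p) (a * x ^ 5 + b * x ^ 3 + c * x) : ℤ) : ZMod p)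
      = -((Nat.choose ((p - 1) / 2) ((p - 1) / 4) : ZMod p)) * b ^ ((p - 1) / 4)
          * (a ^ ((p - 1) / 4) + c ^ ((p - 1) / 4))
          * (1 + ∑ k ∈ Finset.Icc 1 ((p - 1) / 8),
              (∏ j ∈ Finset.range k,
                (((8 * j + 1) * (8 * j + 5) : ℕ) : ZMod p)
                  / (((4 * (j + 1) * (4 * j + 3) : ℕ) : ZMod p)))
                * (a * c / b ^ 2) ^ k) := by
  obtain ⟨T, hT⟩ : ∃ T, p = 4 * T + 1 := ⟨p / 4, by omega⟩
  rw [show (p - 1) / 2 = 2 * T by omega, show (p - 1) / 4 = T by omega,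
    show (p - 1) / 8 = T / 2 by omega, sum_quadraticChar_quintic (by rw [ZMod.card, hT]),
    sum_congr rfl fun k hk => ZMod.trinomialTerm_add_trinomialTerm_swap hT hb
      (by simp only [mem_range] at hk; omega),
    ← mul_sum, neg_mul_eq_neg_mul, range_eq_Ico, sum_eq_sum_Ico_succ_bot (by omega),
    Ico_add_one_right_eq_Icc]
  simp

theorem stmt_18 (p : ℕ) [Fact p.Prime] (hp : p % 4 = 1)
    (a b c : ZMod p) (ha : a ≠ 0) (hb : b ≠ 0) (hc : c ≠ 0) :
    ((∑ x : ZMod p, quadraticChar (ZMod p) (a * x ^ 5 + b * x ^ 3 + c * x) : ℤ) : ZMod p)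
      = -((Nat.choose ((p - 1) / 2) ((p - 1) / 4) : ZMod p)) * b ^ ((p - 1) / 4)
          * (a ^ ((p - 1) / 4) + c ^ ((p - 1) / 4))
          * (1 + ∑ k ∈ Finset.Icc 1 ((p - 1) / 8),
              (∏ j ∈ Finset.range k,
                (((8 * j + 1) * (8 * j + 5) : ℕ) : ZMod p)
                  / (((4 * (j + 1) * (4 * j + 3) : ℕ) : ZMod p)))
                * (a * c / b ^ 2) ^ k) :=
  stmt_18_general p hp a b c hb
end

section
/- Let p = 4n+1 be prime with n ≥ 1. Define over F_p the polynomials g(z) = 1 + Σ_{k=1}^{n} ((4k−1)!!/(4^k (k!)²)) z^k and f(z) = 1 + Σ_{k=1}^{⌊(p−1)/8⌋} ∏_{j=0}^{k−1} ((8j+1)(8j+5))/(4(j+1)(4j+3)) · z^k. Then in F_p[z] one has −(2n)!·(n!)²·g(z) = (16z−2)ⁿ · f((16z−2)^{−2}), where the right side is a polynomial since deg f ≤ n/2. -/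
open Polynomial Finset

lemma fact_double (N : ℕ) :
    Nat.factorial (2 * N) = 2 ^ N * Nat.factorial N * ∏ j ∈ range N, (2 * j + 1) := by
  induction N with
  | zero => simp
  | succ t ih =>
    have h2 : 2 * (t + 1) = 2 * t + 1 + 1 := by ring
    rw [h2, Nat.factorial_succ, Nat.factorial_succ, ih, prod_range_succ, Nat.factorial_succ]
    ring

lemma aux_nz (p : ℕ) [Fact p.Prime] (a : ℕ) (h0 : 0 < a) (h1 : a < p) :
    (a : ZMod p) ≠ 0 := by
  rw [Ne, ZMod.natCast_eq_zero_iff]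
  intro h
  have := Nat.le_of_dvd h0 h
  omega

lemma Lws {R : Type*} [CommRing R] (γ : R) (s : ℕ) :
    X * (1 - 4 * X) * derivative (derivative ((16 * X - 2 : R[X]) ^ s))
      + (1 - 8 * X) * derivative ((16 * X - 2 : R[X]) ^ s)
      + C γ * (16 * X - 2 : R[X]) ^ s
    = C (16 * (s : R) * ((s : R) - 1)) * (16 * X - 2 : R[X]) ^ (s - 2)
      + C (γ - 4 * (s : R) * ((s : R) + 1)) * (16 * X - 2 : R[X]) ^ s := by
  have hd : derivative ((16 * X - 2 : R[X])) = 16 := by simp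
  have hC : ∀ a b : R, C (a - b) = C a - C b := fun a b => map_sub C a b
  match s with
  | 0 => simp [map_sub, map_mul]
  | 1 =>
    simp only [pow_one, hd, derivative_sub, derivative_mul, derivative_X, derivative_ofNat,
      mul_one, mul_zero, zero_mul, zero_sub, sub_zero, add_zero, zero_add, Nat.cast_one]
    simp only [map_mul, map_add, map_sub, map_ofNat, map_one, hC]
    norm_num
    ring
  | (t+2) =>
    rw [derivative_pow, hd, derivative_mul, derivative_mul, derivative_pow, hd]
    have e0 : t + 2 - 1 - 1 = t := rfl
    have e1 : t + 2 - 1 = t + 1 := rfl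
    have e2 : t + 2 - 2 = t := rfl
    rw [e0, e1, e2]
    simp only [derivative_C, derivative_ofNat, derivative_natCast, mul_zero, zero_mul, add_zero,
      zero_add]
    rw [pow_succ, pow_succ]
    push_cast
    simp only [map_mul, map_add, map_sub, map_ofNat, map_one, map_natCast, hC]
    ring

lemma coeffL {R : Type*} [CommRing R] (γ : R) (F : R[X]) (k : ℕ) :
    (X * (1 - 4 * X) * derivative (derivative F) + (1 - 8 * X) * derivative F
      + C γ * F).coeff k
    = ((k : R) + 1) ^ 2 * F.coeff (k + 1) + (γ - 4 * (k : R) * ((k : R) + 1)) * F.coeff k := by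
  have hexp : X * (1 - 4 * X) * derivative (derivative F) + (1 - 8 * X) * derivative F + C γ * F
      = X * derivative (derivative F) - X * (X * (4 * derivative (derivative F)))
        + derivative F - X * (8 * derivative F) + C γ * F := by ring
  rw [hexp]
  match k with
  | 0 =>
    simp [coeff_derivative, mul_coeff_zero]
  | 1 =>
    simp only [coeff_add, coeff_sub, coeff_X_mul, mul_coeff_zero, coeff_X_zero, zero_mul,
      coeff_C_mul, coeff_derivative, coeff_ofNat_mul]
    push_cast
    ring
  | (i+2) =>
    simp only [coeff_add, coeff_sub, coeff_X_mul, coeff_C_mul, coeff_derivative,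
      coeff_ofNat_mul]
    push_cast
    ring

noncomputable def aa (p : ℕ) [Fact p.Prime] : ℕ → ZMod p := fun k =>
  ((∏ j ∈ Finset.range (2 * k), (2 * j + 1) : ℕ) : ZMod p)
    / ((4 : ZMod p) ^ k * (Nat.factorial k : ZMod p) ^ 2)

noncomputable def cc (p : ℕ) [Fact p.Prime] : ℕ → ZMod p := fun k =>
  ∏ j ∈ Finset.range k,
    (((8 * j + 1) * (8 * j + 5) : ℕ) : ZMod p) / (((4 * (j + 1) * (4 * j + 3) : ℕ) : ZMod p))

theorem stmt_19 (p n : ℕ) (hn : 1 ≤ n) (hp : p = 4 * n + 1) [Fact p.Prime] :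
    Polynomial.C (-((Nat.factorial (2 * n) : ZMod p) * (Nat.factorial n : ZMod p) ^ 2))
        * (1 + ∑ k ∈ Finset.Icc 1 n,
            Polynomial.C (((∏ j ∈ Finset.range (2 * k), (2 * j + 1) : ℕ) : ZMod p)
                / ((4 : ZMod p) ^ k * (Nat.factorial k : ZMod p) ^ 2))
              * Polynomial.X ^ k)
      = ∑ k ∈ Finset.range ((p - 1) / 8 + 1),
          Polynomial.C (∏ j ∈ Finset.range k,
              (((8 * j + 1) * (8 * j + 5) : ℕ) : ZMod p)
                / (((4 * (j + 1) * (4 * j + 3) : ℕ) : ZMod p)))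
            * (16 * Polynomial.X - 2) ^ (n - 2 * k) := by
  have hp5 : 5 ≤ p := by omega
  have hpr : p.Prime := Fact.out
  have hnz : ∀ a : ℕ, 0 < a → a < p → (a : ZMod p) ≠ 0 := aux_nz p
  have h2 : (2 : ZMod p) ≠ 0 := by
    have := hnz 2 (by norm_num) (by omega); simpa using this
  have h4 : (4 : ZMod p) ≠ 0 := by
    have h : (4 : ZMod p) = 2 ^ 2 := by norm_num
    rw [h]; exact pow_ne_zero _ h2
  have h16 : (16 : ZMod p) ≠ 0 := by
    have h : (16 : ZMod p) = 2 ^ 4 := by norm_num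
    rw [h]; exact pow_ne_zero _ h2
  have hfac : ∀ m : ℕ, m < p → ((Nat.factorial m : ZMod p)) ≠ 0 := by
    intro m hm
    rw [Ne, ZMod.natCast_eq_zero_iff]
    intro hdvd
    have := (Nat.Prime.dvd_factorial hpr).mp hdvd
    omega
  have hpz : (4 : ZMod p) * n + 1 = 0 := by
    have h : ((4 * n + 1 : ℕ) : ZMod p) = 0 := by rw [← hp]; exact ZMod.natCast_self p
    push_cast at h; linear_combination h
  show C (-((Nat.factorial (2 * n) : ZMod p) * (Nat.factorial n : ZMod p) ^ 2))
      * (1 + ∑ k ∈ Icc 1 n, C (aa p k) * X ^ k)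
    = ∑ k ∈ range ((p - 1) / 8 + 1), C (cc p k) * (16 * X - 2) ^ (n - 2 * k)
  set M := (p - 1) / 8 with hMdef
  have hM2 : 2 * M ≤ n := by omega
  have hM3 : n < 2 * M + 2 := by omega
  set w : (ZMod p)[X] := 16 * X - 2 with hwdef
  set S : (ZMod p)[X] := 1 + ∑ k ∈ Icc 1 n, C (aa p k) * X ^ k with hSdef
  set Q : (ZMod p)[X] := ∑ k ∈ range (M + 1), C (cc p k) * w ^ (n - 2 * k) with hQdef
  set P : (ZMod p)[X] :=
    C (-((Nat.factorial (2 * n) : ZMod p) * (Nat.factorial n : ZMod p) ^ 2)) * S with hPdef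
  -- coefficients of S
  have haa0 : aa p 0 = 1 := by simp [aa]
  have hScoeff : ∀ j, S.coeff j = if j ≤ n then aa p j else 0 := by
    intro j
    rw [hSdef, coeff_add, finset_sum_coeff]
    simp only [coeff_C_mul, coeff_X_pow, mul_ite, mul_one, mul_zero]
    rw [Finset.sum_ite_eq (Icc 1 n) j (fun k => aa p k)]
    rw [coeff_one]
    by_cases hj0 : j = 0
    · subst hj0
      rw [if_pos rfl, if_neg (by simp), if_pos (by omega), haa0]
      ring
    · rw [if_neg hj0, zero_add]
      by_cases hjn : j ≤ n
      · rw [if_pos (mem_Icc.mpr ⟨by omega, hjn⟩), if_pos hjn]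
      · rw [if_neg (by rw [mem_Icc]; omega), if_neg hjn]
  -- recurrence for P
  have hPcoeff : ∀ j, P.coeff j
      = (-((Nat.factorial (2 * n) : ZMod p) * (Nat.factorial n : ZMod p) ^ 2)) * S.coeff j := by
    intro j; rw [hPdef, coeff_C_mul]
  have hrecP : ∀ k : ℕ, ((k : ZMod p) + 1) ^ 2 * P.coeff (k + 1)
      + 4 * ((n : ZMod p) - k) * ((n : ZMod p) + k + 1) * P.coeff k = 0 := by
    intro k
    rw [hPcoeff, hPcoeff, hScoeff, hScoeff]
    by_cases hk : k + 1 ≤ n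
    · rw [if_pos hk, if_pos (by omega : k ≤ n)]
      have hprod : (∏ j ∈ range (2 * (k + 1)), (2 * j + 1))
          = (∏ j ∈ range (2 * k), (2 * j + 1)) * ((4 * k + 1) * (4 * k + 3)) := by
        have e : 2 * (k + 1) = (2 * k) + 1 + 1 := by ring
        rw [e, prod_range_succ, prod_range_succ]
        ring
      have hsplit : (((4 * k + 1) * (4 * k + 3) : ℕ) : ZMod p)
          = -(16 * ((n : ZMod p) - k) * ((n : ZMod p) + k + 1)) := by
        push_cast
        linear_combination (4 * (n : ZMod p) + 3) * hpz
      have hcast : ((∏ j ∈ range (2 * (k + 1)), (2 * j + 1) : ℕ) : ZMod p)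
          = -(16 * ((n : ZMod p) - k) * ((n : ZMod p) + k + 1))
            * ((∏ j ∈ range (2 * k), (2 * j + 1) : ℕ) : ZMod p) := by
        rw [hprod, Nat.cast_mul, hsplit]; ring
      have hkf : ((Nat.factorial k : ZMod p)) ≠ 0 := hfac k (by omega)
      have hk1 : ((k : ZMod p) + 1) ≠ 0 := by
        have h := hnz (k + 1) (by omega) (by omega)
        push_cast at h; exact h
      have harec : ((k : ZMod p) + 1) ^ 2 * aa p (k + 1)
          = -(4 * ((n : ZMod p) - k) * ((n : ZMod p) + k + 1)) * aa p k := by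
        simp only [aa]
        rw [hcast, Nat.factorial_succ]
        push_cast
        field_simp
        ring
      linear_combination
        (-((Nat.factorial (2 * n) : ZMod p) * (Nat.factorial n : ZMod p) ^ 2)) * harec
    · rw [if_neg hk]
      by_cases hk2 : k ≤ n
      · rw [if_pos hk2]
        have hzz : ((n : ZMod p) - (k : ZMod p)) = 0 := by
          have hkn : k = n := by omega
          rw [hkn]; ring
        rw [hzz]; ring
      · rw [if_neg hk2]; ring
  -- key scalar identity for cc
  have hkey : ∀ m, m < M →
      cc p m * (16 * ((n : ZMod p) - ((2 * m : ℕ) : ZMod p))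
          * (((n : ZMod p) - ((2 * m : ℕ) : ZMod p)) - 1))
        + cc p (m + 1) * (4 * (n : ZMod p) * ((n : ZMod p) + 1)
          - 4 * ((n : ZMod p) - ((2 * (m + 1) : ℕ) : ZMod p))
            * (((n : ZMod p) - ((2 * (m + 1) : ℕ) : ZMod p)) + 1)) = 0 := by
    intro m hm
    have hm1 : ((m : ZMod p) + 1) ≠ 0 := by
      have h := hnz (m + 1) (by omega) (by omega)
      push_cast at h; exact h
    have hm43 : (4 * (m : ZMod p) + 3) ≠ 0 := by
      have h := hnz (4 * m + 3) (by omega) (by omega)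
      push_cast at h; exact h
    have hv : (((4 * (m + 1) * (4 * m + 3) : ℕ)) : ZMod p) ≠ 0 := by
      push_cast
      exact mul_ne_zero (mul_ne_zero h4 hm1) hm43
    have hcrec : cc p (m + 1) * (((4 * (m + 1) * (4 * m + 3) : ℕ)) : ZMod p)
        = cc p m * (((8 * m + 1) * (8 * m + 5) : ℕ) : ZMod p) := by
      simp only [cc]
      rw [prod_range_succ, mul_assoc, div_mul_cancel₀ _ hv]
    push_cast at hcrec ⊢
    apply mul_right_cancel₀ (b := 4 * ((m : ZMod p) + 1) * (4 * (m : ZMod p) + 3))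
      (mul_ne_zero (mul_ne_zero h4 hm1) hm43)
    linear_combination
      (4 * (n : ZMod p) * ((n : ZMod p) + 1)
        - 4 * ((n : ZMod p) - (2 * (m : ZMod p) + 2))
          * ((n : ZMod p) - (2 * (m : ZMod p) + 2) + 1)) * hcrec
      + (cc p m * (64 * (n : ZMod p) * (m : ZMod p) ^ 2 + 112 * (n : ZMod p) * (m : ZMod p)
          + 48 * (n : ZMod p) - 80 * (m : ZMod p) ^ 2 - 120 * (m : ZMod p) - 40)) * hpz
  -- differential equation for Q
  have hLQ : X * (1 - 4 * X) * derivative (derivative Q) + (1 - 8 * X) * derivative Q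
      + C (4 * (n : ZMod p) * ((n : ZMod p) + 1)) * Q = 0 := by
    have hexpe : ∀ m : ℕ, n - 2 * m - 2 = n - 2 * (m + 1) := fun m => by omega
    calc X * (1 - 4 * X) * derivative (derivative Q) + (1 - 8 * X) * derivative Q
          + C (4 * (n : ZMod p) * ((n : ZMod p) + 1)) * Q
        = ∑ m ∈ range (M + 1), C (cc p m) *
            (X * (1 - 4 * X) * derivative (derivative (w ^ (n - 2 * m)))
              + (1 - 8 * X) * derivative (w ^ (n - 2 * m))
              + C (4 * (n : ZMod p) * ((n : ZMod p) + 1)) * w ^ (n - 2 * m)) := by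
          rw [hQdef]
          simp only [derivative_sum, derivative_C_mul, Finset.mul_sum, ← Finset.sum_add_distrib]
          exact sum_congr rfl fun m _ => by ring
      _ = ∑ m ∈ range (M + 1),
            (C (cc p m * (16 * ((n : ZMod p) - ((2 * m : ℕ) : ZMod p))
                * (((n : ZMod p) - ((2 * m : ℕ) : ZMod p)) - 1))) * w ^ (n - 2 * m - 2)
             + C (cc p m * (4 * (n : ZMod p) * ((n : ZMod p) + 1)
                - 4 * ((n : ZMod p) - ((2 * m : ℕ) : ZMod p))
                  * (((n : ZMod p) - ((2 * m : ℕ) : ZMod p)) + 1))) * w ^ (n - 2 * m)) := by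
          refine sum_congr rfl fun m hm => ?_
          have h2m : 2 * m ≤ n := by
            have := mem_range.mp hm; omega
          rw [hwdef, Lws (4 * (n : ZMod p) * ((n : ZMod p) + 1)) (n - 2 * m), mul_add,
            ← mul_assoc, ← mul_assoc, ← map_mul, ← map_mul]
          simp only [Nat.cast_sub h2m]
      _ = (∑ m ∈ range (M + 1), C (cc p m * (16 * ((n : ZMod p) - ((2 * m : ℕ) : ZMod p))
                * (((n : ZMod p) - ((2 * m : ℕ) : ZMod p)) - 1))) * w ^ (n - 2 * m - 2))
          + ∑ m ∈ range (M + 1), C (cc p m * (4 * (n : ZMod p) * ((n : ZMod p) + 1)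
                - 4 * ((n : ZMod p) - ((2 * m : ℕ) : ZMod p))
                  * (((n : ZMod p) - ((2 * m : ℕ) : ZMod p)) + 1))) * w ^ (n - 2 * m) := by
          rw [Finset.sum_add_distrib]
      _ = (∑ m ∈ range M, C (cc p m * (16 * ((n : ZMod p) - ((2 * m : ℕ) : ZMod p))
                * (((n : ZMod p) - ((2 * m : ℕ) : ZMod p)) - 1))) * w ^ (n - 2 * m - 2))
          + ∑ m ∈ range M, C (cc p (m + 1) * (4 * (n : ZMod p) * ((n : ZMod p) + 1)
                - 4 * ((n : ZMod p) - ((2 * (m + 1) : ℕ) : ZMod p))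
                  * (((n : ZMod p) - ((2 * (m + 1) : ℕ) : ZMod p)) + 1))) * w ^ (n - 2 * (m + 1)) := by
          rw [sum_range_succ, sum_range_succ']
          have hlast : cc p M * (16 * ((n : ZMod p) - ((2 * M : ℕ) : ZMod p))
              * (((n : ZMod p) - ((2 * M : ℕ) : ZMod p)) - 1)) = 0 := by
            rcases (by omega : n = 2 * M ∨ n = 2 * M + 1) with h | h
            · rw [h]; push_cast; ring
            · rw [h]; push_cast; ring
          have hfirst : cc p 0 * (4 * (n : ZMod p) * ((n : ZMod p) + 1)
              - 4 * ((n : ZMod p) - ((2 * 0 : ℕ) : ZMod p))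
                * (((n : ZMod p) - ((2 * 0 : ℕ) : ZMod p)) + 1)) = 0 := by
            push_cast; ring
          rw [hlast, hfirst]
          simp only [map_zero, zero_mul, add_zero]
      _ = ∑ m ∈ range M,
            (C (cc p m * (16 * ((n : ZMod p) - ((2 * m : ℕ) : ZMod p))
                * (((n : ZMod p) - ((2 * m : ℕ) : ZMod p)) - 1))) * w ^ (n - 2 * (m + 1))
             + C (cc p (m + 1) * (4 * (n : ZMod p) * ((n : ZMod p) + 1)
                - 4 * ((n : ZMod p) - ((2 * (m + 1) : ℕ) : ZMod p))
                  * (((n : ZMod p) - ((2 * (m + 1) : ℕ) : ZMod p)) + 1))) * w ^ (n - 2 * (m + 1))) := by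
          simp only [hexpe]
          rw [Finset.sum_add_distrib]
      _ = 0 := by
          apply Finset.sum_eq_zero
          intro m hm
          rw [← add_mul, ← map_add, hkey m (mem_range.mp hm), map_zero, zero_mul]
  -- recurrence for Q
  have hrecQ : ∀ k : ℕ, ((k : ZMod p) + 1) ^ 2 * Q.coeff (k + 1)
      + 4 * ((n : ZMod p) - k) * ((n : ZMod p) + k + 1) * Q.coeff k = 0 := by
    intro k
    have h := congrArg (fun q => q.coeff k) hLQ
    simp only [coeff_zero] at h
    rw [coeffL] at h
    linear_combination h
  -- vanishing above degree n
  have hP0 : ∀ j, n < j → P.coeff j = 0 := by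
    intro j hj
    rw [hPcoeff, hScoeff, if_neg (by omega), mul_zero]
  have hwdeg : w.natDegree ≤ 1 := by
    rw [hwdef]
    refine le_trans (natDegree_sub_le _ _) (max_le ?_ ?_)
    · refine le_trans (natDegree_mul_le) ?_
      simp [natDegree_X]
    · simp
  have hQ0 : ∀ j, n < j → Q.coeff j = 0 := by
    intro j hj
    rw [hQdef, finset_sum_coeff]
    apply Finset.sum_eq_zero
    intro m hm
    rw [coeff_C_mul, coeff_eq_zero_of_natDegree_lt, mul_zero]
    calc (w ^ (n - 2 * m)).natDegree ≤ (n - 2 * m) * w.natDegree := natDegree_pow_le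
      _ ≤ (n - 2 * m) * 1 := Nat.mul_le_mul_left _ hwdeg
      _ < j := by omega
  -- leading coefficients
  have hwlin : w = C (16 : ZMod p) * X + C (-2 : ZMod p) := by
    rw [hwdef, map_neg, map_ofNat, map_ofNat]; ring
  have hwdeg1 : w.natDegree = 1 := by rw [hwlin]; exact natDegree_linear h16
  have hwlead : w.leadingCoeff = 16 := by rw [hwlin]; exact leadingCoeff_linear h16
  have hQn : Q.coeff n = 16 ^ n := by
    rw [hQdef, finset_sum_coeff]
    have hz : ∀ b ∈ range (M + 1), b ≠ 0 → (C (cc p b) * w ^ (n - 2 * b)).coeff n = 0 := by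
      intro m hm hm0
      have hmr := mem_range.mp hm
      rw [coeff_C_mul, coeff_eq_zero_of_natDegree_lt, mul_zero]
      calc (w ^ (n - 2 * m)).natDegree ≤ (n - 2 * m) * w.natDegree := natDegree_pow_le
        _ ≤ (n - 2 * m) * 1 := Nat.mul_le_mul_left _ hwdeg
        _ < n := by omega
    rw [Finset.sum_eq_single_of_mem 0 (mem_range.mpr (Nat.succ_pos M)) hz]
    have hc0 : cc p 0 = 1 := by simp [cc]
    rw [coeff_C_mul, hc0, one_mul]
    simp only [Nat.mul_zero, Nat.sub_zero]
    have hdeg : (w ^ n).natDegree = n := by rw [natDegree_pow, hwdeg1, mul_one]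
    have hlc : (w ^ n).coeff n = (w ^ n).leadingCoeff := by
      rw [Polynomial.leadingCoeff, hdeg]
    rw [hlc, leadingCoeff_pow, hwlead]
  have hPn : P.coeff n = 16 ^ n := by
    rw [hPcoeff, hScoeff, if_pos (le_refl n)]
    have hW : ((Nat.factorial (4 * n) : ZMod p)) = -1 := by
      have h := ZMod.wilsons_lemma (p := p)
      have e : p - 1 = 4 * n := by omega
      rw [e] at h; exact h
    have hfd : Nat.factorial (4 * n)
        = 2 ^ (2 * n) * Nat.factorial (2 * n) * ∏ j ∈ range (2 * n), (2 * j + 1) := by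
      have h := fact_double (2 * n)
      rw [show 2 * (2 * n) = 4 * n from by ring] at h
      exact h
    have hN : (4 : ZMod p) ^ n * (((Nat.factorial (2 * n) : ZMod p))
        * ((∏ j ∈ range (2 * n), (2 * j + 1) : ℕ) : ZMod p)) = -1 := by
      have hcast := congrArg (fun m : ℕ => (m : ZMod p)) hfd
      simp only [Nat.cast_mul, Nat.cast_pow, Nat.cast_ofNat] at hcast
      rw [hW] at hcast
      have h24 : (2 : ZMod p) ^ (2 * n) = 4 ^ n := by
        rw [pow_mul]; norm_num
      rw [h24] at hcast
      linear_combination -hcast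
    have hFlt : (2 : ZMod p) ^ (p - 1) = 1 := ZMod.pow_card_sub_one_eq_one h2
    have h256 : (256 : ZMod p) ^ n = 1 := by
      have e : (256 : ZMod p) = 2 ^ 8 := by norm_num
      rw [e, ← pow_mul, show 8 * n = (p - 1) * 2 from by omega, pow_mul, hFlt, one_pow]
    simp only [aa]
    have hd1 : (4 : ZMod p) ^ n ≠ 0 := pow_ne_zero _ h4
    have hd2 : ((Nat.factorial n : ZMod p)) ≠ 0 := hfac n (by omega)
    rw [← mul_div_assoc, div_eq_iff (mul_ne_zero hd1 (pow_ne_zero 2 hd2))]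
    apply mul_left_cancel₀ hd1
    have hpow : (4 : ZMod p) ^ n * 16 ^ n * 4 ^ n = 256 ^ n := by
      rw [← mul_pow, ← mul_pow]; norm_num
    linear_combination (-(Nat.factorial n : ZMod p) ^ 2) * hN
      + (-(Nat.factorial n : ZMod p) ^ 2) * h256
      + (-(Nat.factorial n : ZMod p) ^ 2) * hpow
  have hlead : P.coeff n = Q.coeff n := by rw [hPn, hQn]
  -- downward induction
  have key : ∀ j, j ≤ n → P.coeff (n - j) = Q.coeff (n - j) := by
    intro j
    induction j with
    | zero => intro _; simpa using hlead
    | succ i ih =>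
      intro hij
      have hi : i ≤ n := by omega
      have he : P.coeff (n - i) = Q.coeff (n - i) := ih hi
      have hk1 : n - (i + 1) + 1 = n - i := by omega
      have he2 : P.coeff (n - (i + 1) + 1) = Q.coeff (n - (i + 1) + 1) := by rw [hk1]; exact he
      have h1 := hrecP (n - (i + 1))
      have h2 := hrecQ (n - (i + 1))
      have hne1 : ((n : ZMod p) - ((n - (i + 1) : ℕ) : ZMod p)) ≠ 0 := by
        rw [show ((n - (i + 1) : ℕ) : ZMod p) = (n : ZMod p) - ((i + 1 : ℕ) : ZMod p) from
          Nat.cast_sub (by omega)]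
        rw [sub_sub_cancel]
        exact hnz (i + 1) (by omega) (by omega)
      have hne2 : ((n : ZMod p) + ((n - (i + 1) : ℕ) : ZMod p) + 1) ≠ 0 := by
        rw [show ((n : ZMod p) + ((n - (i + 1) : ℕ) : ZMod p) + 1)
            = (((n + (n - (i + 1)) + 1 : ℕ)) : ZMod p) from by push_cast; ring]
        exact hnz (n + (n - (i + 1)) + 1) (by omega) (by omega)
      have hmul : (4 * ((n : ZMod p) - ((n - (i + 1) : ℕ) : ZMod p))
            * ((n : ZMod p) + ((n - (i + 1) : ℕ) : ZMod p) + 1)) * P.coeff (n - (i + 1))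
          = (4 * ((n : ZMod p) - ((n - (i + 1) : ℕ) : ZMod p))
            * ((n : ZMod p) + ((n - (i + 1) : ℕ) : ZMod p) + 1)) * Q.coeff (n - (i + 1)) := by
        linear_combination h1 - h2 - (((n - (i + 1) : ℕ) : ZMod p) + 1) ^ 2 * he2
      exact mul_left_cancel₀ (mul_ne_zero (mul_ne_zero h4 hne1) hne2) hmul
  apply Polynomial.ext
  intro j
  by_cases hj : j ≤ n
  · have h := key (n - j) (by omega)
    have e : n - (n - j) = j := by omega
    rwa [e] at h
  · rw [hP0 j (by omega), hQ0 j (by omega)]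
end
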